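/- arXiv:0905.1608 — 8 statements merged into one kernel-verified Lean document; each statement's English description precedes it below -/
import Mathlib

section
/- Let β, b ∈ ℕ^m and A ∈ ℕ^{m×n} with columns A_1,…,A_n satisfy b ≤ β and A_k ≤ β for all 1 ≤ k ≤ n. Then the linear system Ax = b has a solution x ∈ ℕ^n if and only if the polynomial z^b − 1 ∈ ℝ[z_1,…,z_m] can be written as z^b − 1 = Σ_{k=1}^n Q_k(z)·(z^{A_k} − 1), where each Q_k ∈ ℝ[z_1,…,z_m] has only nonnegative coefficients and multivariate degree bounded by β − A_k (i.e., every monomial z^u occurring in Q_k satisfies u ≤ β − A_k entrywise). -/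
open MvPolynomial

noncomputable section

variable {m : ℕ}

def toF (f : Fin m → ℕ) : Fin m →₀ ℕ := Finsupp.equivFunOnFinite.symm f

@[simp] lemma toF_apply (f : Fin m → ℕ) (j : Fin m) : toF f j = f j := rfl

lemma prod_pow_eq (f : Fin m → ℕ) :
    (∏ j, (X j : MvPolynomial (Fin m) ℝ) ^ f j) = monomial (toF f) 1 := by
  rw [← prod_X_pow_eq_monomial]
  refine (Finset.prod_subset (Finset.subset_univ _) ?_).symm
  intro j _ hj
  have : toF f j = 0 := Finsupp.notMem_support_iff.mp hj
  simp [show f j = 0 from this]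

lemma farkas_fwd {n : ℕ} (A : Matrix (Fin m) (Fin n) ℕ) (β b : Fin m → ℕ)
    (hb : ∀ j, b j ≤ β j) (hA : ∀ k j, A j k ≤ β j)
    (x : Fin n → ℕ) (hx : ∀ j, ∑ k, A j k * x k = b j) :
    ∃ Q : Fin n → MvPolynomial (Fin m) ℝ,
      ((∏ j, (X j : MvPolynomial (Fin m) ℝ) ^ b j) - 1 =
        ∑ k, Q k * ((∏ j, (X j : MvPolynomial (Fin m) ℝ) ^ A j k) - 1)) ∧
      (∀ k d, 0 ≤ MvPolynomial.coeff d (Q k)) ∧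
      (∀ k, ∀ d ∈ (Q k).support, ∀ j, d j ≤ β j - A j k) := by
  classical
  set a' : ℕ → (Fin m →₀ ℕ) := fun i =>
    if h : i < n then toF (fun j => A j ⟨i, h⟩) else 0 with ha'
  set x' : ℕ → ℕ := fun i => if h : i < n then x ⟨i, h⟩ else 0 with hx'
  set S : ℕ → (Fin m →₀ ℕ) := fun K => ∑ i ∈ Finset.range K, x' i • a' i with hS
  have ha'k : ∀ k : Fin n, a' k.val = toF (fun j => A j k) := by
    intro k; simp [ha', k.isLt]
  have hx'k : ∀ k : Fin n, x' k.val = x k := by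
    intro k; simp [hx', k.isLt]
  have hSapp : ∀ K j, S K j = ∑ i ∈ Finset.range K, x' i * a' i j := by
    intro K j
    rw [hS]
    rw [Finsupp.finset_sum_apply]
    exact Finset.sum_congr rfl fun i _ => by simp
  have hfull : ∀ j, ∑ i ∈ Finset.range n, x' i * a' i j = b j := by
    intro j
    rw [← Fin.sum_univ_eq_sum_range (fun i => x' i * a' i j) n, ← hx j]
    refine Finset.sum_congr rfl fun k _ => ?_
    rw [hx'k, ha'k]
    simp [mul_comm]
  refine ⟨fun k => ∑ t ∈ Finset.range (x k), monomial (S k.val + t • a' k.val) 1,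
    ?_, ?_, ?_⟩
  · -- the identity
    rw [prod_pow_eq b]
    have hcol : ∀ k : Fin n, (∏ j, (X j : MvPolynomial (Fin m) ℝ) ^ A j k)
        = monomial (a' k.val) 1 := by
      intro k; rw [ha'k, ← prod_pow_eq]
    calc (monomial (toF b) (1:ℝ)) - 1
        = monomial (S n) 1 - monomial (S 0) 1 := by
          have h1 : S n = toF b := by
            ext j; rw [hSapp]; exact hfull j
          have h2 : S 0 = 0 := by simp [hS]
          rw [h1, h2]; simp
      _ = ∑ i ∈ Finset.range n,
            ((monomial (S (i+1)) (1:ℝ)) - monomial (S i) 1) :=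
          (Finset.sum_range_sub (fun i => monomial (S i) (1:ℝ)) n).symm
      _ = ∑ k : Fin n, ((monomial (S (k.val+1)) (1:ℝ)) - monomial (S k.val) 1) :=
          (Fin.sum_univ_eq_sum_range (fun i => (monomial (S (i+1)) (1:ℝ)) - monomial (S i) 1) n).symm
      _ = ∑ k : Fin n, (∑ t ∈ Finset.range (x k), monomial (S k.val + t • a' k.val) 1) *
            ((∏ j, (X j : MvPolynomial (Fin m) ℝ) ^ A j k) - 1) := by
          refine Finset.sum_congr rfl fun k _ => ?_
          rw [hcol k, Finset.sum_mul]
          have step : ∀ t, (monomial (S k.val + t • a' k.val) (1:ℝ)) *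
              (monomial (a' k.val) 1 - 1)
              = monomial (S k.val + (t+1) • a' k.val) 1 - monomial (S k.val + t • a' k.val) 1 := by
            intro t
            rw [mul_sub, mul_one, monomial_mul, mul_one]
            congr 2
            rw [succ_nsmul, add_assoc]
          rw [Finset.sum_congr rfl fun t _ => step t]
          have tele := Finset.sum_range_sub
            (fun t => (monomial (S k.val + t • a' k.val) (1:ℝ))) (x k)
          rw [tele]
          have hS1 : S (k.val + 1) = S k.val + x k • a' k.val := by
            simp only [hS]
            rw [Finset.sum_range_succ, hx'k]
          rw [← hS1]
          simp
  · -- nonneg coefficients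
    intro k d
    rw [coeff_sum]
    refine Finset.sum_nonneg fun t _ => ?_
    rw [coeff_monomial]
    split <;> norm_num
  · -- support bound
    intro k d hd j
    rw [mem_support_iff, coeff_sum] at hd
    obtain ⟨t, ht, hne⟩ := Finset.exists_ne_zero_of_sum_ne_zero hd
    rw [coeff_monomial] at hne
    have hdt : S k.val + t • a' k.val = d := by
      by_contra hcon; rw [if_neg hcon] at hne; exact hne rfl
    have htlt : t < x k := Finset.mem_range.mp ht
    have hdj : d j = S k.val j + t * A j k := by
      rw [← hdt]
      simp [Finsupp.add_apply, ha'k]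
    have key : d j + A j k ≤ b j := by
      have h1 : d j + A j k = S k.val j + (t+1) * A j k := by
        rw [hdj, add_one_mul]; omega
      have h2 : (t+1) * A j k ≤ x k * A j k := Nat.mul_le_mul_right _ htlt
      have h3 : S k.val j + x k * A j k = ∑ i ∈ Finset.range (k.val+1), x' i * a' i j := by
        rw [Finset.sum_range_succ, ← hSapp, hx'k, ha'k]
        simp
      have h4 : ∑ i ∈ Finset.range (k.val+1), x' i * a' i j
          ≤ ∑ i ∈ Finset.range n, x' i * a' i j :=
        Finset.sum_le_sum_of_subset (Finset.range_subset_range.mpr k.isLt)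
      rw [hfull] at h4
      omega
    have := hb j
    omega

def L (s : Finset (Fin m →₀ ℕ)) (g : (Fin m →₀ ℕ) → ℝ) :
    MvPolynomial (Fin m) ℝ →ₗ[ℝ] ℝ where
  toFun p := ∑ u ∈ s, coeff u p * g u
  map_add' p q := by simp [coeff_add, add_mul, Finset.sum_add_distrib]
  map_smul' c p := by simp [coeff_smul, smul_eq_mul, mul_assoc, Finset.mul_sum]

lemma L_monomial (s : Finset (Fin m →₀ ℕ)) (g : (Fin m →₀ ℕ) → ℝ)
    (v : Fin m →₀ ℕ) (hv : v ∈ s) (c : ℝ) :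
    L s g (monomial v c) = c * g v := by
  simp only [L, LinearMap.coe_mk, AddHom.coe_mk, coeff_monomial, ite_mul, zero_mul,
    Finset.sum_ite_eq, if_pos hv]

/-- Reverse direction of the discrete Farkas lemma. -/
lemma farkas_rev {n : ℕ} (A : Matrix (Fin m) (Fin n) ℕ) (β b : Fin m → ℕ)
    (hb : ∀ j, b j ≤ β j) (hA : ∀ k j, A j k ≤ β j)
    (Q : Fin n → MvPolynomial (Fin m) ℝ)
    (heq : (∏ j, (X j : MvPolynomial (Fin m) ℝ) ^ b j) - 1 =
        ∑ k, Q k * ((∏ j, (X j : MvPolynomial (Fin m) ℝ) ^ A j k) - 1))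
    (hpos : ∀ k d, 0 ≤ MvPolynomial.coeff d (Q k))
    (hsupp : ∀ k, ∀ d ∈ (Q k).support, ∀ j, d j ≤ β j - A j k) :
    ∃ x : Fin n → ℕ, ∀ j, ∑ k, A j k * x k = b j := by
  classical
  set s : Finset (Fin m →₀ ℕ) := Finset.Iic (toF β) with hs
  set R : Set (Fin m →₀ ℕ) := {u | ∃ x : Fin n → ℕ, ∀ j, ∑ k, A j k * x k = u j} with hR
  set g : (Fin m →₀ ℕ) → ℝ := fun u => if u ∈ R then 1 else 0 with hg
  set a : Fin n → (Fin m →₀ ℕ) := fun k => toF (fun j => A j k) with ha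
  -- membership in s
  have mem_s : ∀ u : Fin m →₀ ℕ, (∀ j, u j ≤ β j) → u ∈ s := by
    intro u hu
    rw [hs, Finset.mem_Iic, Finsupp.le_def]
    intro j; simpa using hu j
  have hvs : ∀ k, ∀ v ∈ (Q k).support, v ∈ s := fun k v hv =>
    mem_s v fun j => le_trans (hsupp k v hv j) (Nat.sub_le _ _)
  have hvas : ∀ k, ∀ v ∈ (Q k).support, v + a k ∈ s := by
    intro k v hv
    refine mem_s _ fun j => ?_
    have h1 := hsupp k v hv j
    have h2 := hA k j
    have : (v + a k) j = v j + A j k := by simp [ha, Finsupp.add_apply]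
    rw [this]; omega
  -- closure of R
  have hclos : ∀ u ∈ R, ∀ k, u + a k ∈ R := by
    rintro u ⟨x, hx⟩ k
    refine ⟨fun i => x i + (if i = k then 1 else 0), fun j => ?_⟩
    have e1 : ∑ i, A j i * (x i + (if i = k then 1 else 0))
        = (∑ i, A j i * x i) + ∑ i, A j i * (if i = k then 1 else 0) := by
      rw [← Finset.sum_add_distrib]; exact Finset.sum_congr rfl fun i _ => by ring
    rw [e1, hx j]
    have e2 : ∑ i, A j i * (if i = k then 1 else 0) = A j k := by
      rw [Finset.sum_eq_single k]
      · simp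
      · intro i _ hik; simp [hik]
      · simp
    rw [e2]; simp [ha, Finsupp.add_apply]
  have hgmono : ∀ (u : Fin m →₀ ℕ) (k : Fin n), g u ≤ g (u + a k) := by
    intro u k
    by_cases hu : u ∈ R
    · simp [hg, hu, hclos u hu k]
    · simp only [hg, if_neg hu]
      split <;> norm_num
  -- rewrite the equation in monomial form
  have heq' : (monomial (toF b) (1:ℝ)) - monomial 0 1 =
      ∑ k, Q k * (monomial (a k) 1 - 1) := by
    have h0 : (monomial (0 : Fin m →₀ ℕ) (1:ℝ)) = 1 := by simp
    rw [h0, ← prod_pow_eq b, heq]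
    exact Finset.sum_congr rfl fun k _ => by rw [ha, ← prod_pow_eq]
  -- apply L
  have hQk : ∀ k, L s g (Q k * (monomial (a k) 1 - 1)) =
      ∑ v ∈ (Q k).support, (coeff v (Q k) * g (v + a k) - coeff v (Q k) * g v) := by
    intro k
    conv_lhs => rw [← support_sum_monomial_coeff (Q k)]
    rw [Finset.sum_mul, map_sum]
    refine Finset.sum_congr rfl fun v hv => ?_
    rw [mul_sub, mul_one, monomial_mul, mul_one, map_sub,
      L_monomial _ _ _ (hvs k v hv), L_monomial _ _ _ (hvas k v hv)]
  have h0s : (0 : Fin m →₀ ℕ) ∈ s := mem_s 0 (by simp)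
  have hbs : toF b ∈ s := mem_s _ (by simpa using hb)
  have main : g (toF b) - g 0 =
      ∑ k, ∑ v ∈ (Q k).support, (coeff v (Q k) * g (v + a k) - coeff v (Q k) * g v) := by
    have := congrArg (L s g) heq'
    rw [map_sub, map_sum, L_monomial _ _ _ hbs, L_monomial _ _ _ h0s] at this
    simp only [one_mul] at this
    rw [this]
    exact Finset.sum_congr rfl fun k _ => hQk k
  have hg0 : g 0 = 1 := by
    have : (0 : Fin m →₀ ℕ) ∈ R := ⟨0, fun j => by simp⟩
    simp [hg, this]
  have hnn : 0 ≤ g (toF b) - g 0 := by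
    rw [main]
    refine Finset.sum_nonneg fun k _ => Finset.sum_nonneg fun v hv => ?_
    have := hgmono v k
    have := hpos k v
    nlinarith
  have hbR : toF b ∈ R := by
    by_contra hnot
    rw [hg0] at hnn
    simp [hg, hnot] at hnn
    linarith
  obtain ⟨x, hx⟩ := hbR
  exact ⟨x, fun j => by simpa using hx j⟩


open MvPolynomial in
/-- Discrete Farkas lemma: `Ax = b` has a solution `x ∈ ℕ^n` iff `z^b - 1` is a
nonnegative combination `∑ k, Q k * (z^{A_k} - 1)` with each `Q k` having
nonnegative coefficients and multivariate degree bounded by `β - A_k`. -/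
theorem stmt_4 (m n : ℕ) (hm : 0 < m) (hn : 0 < n)
    (A : Matrix (Fin m) (Fin n) ℕ) (β b : Fin m → ℕ)
    (hb : ∀ j, b j ≤ β j) (hA : ∀ k j, A j k ≤ β j) :
    (∃ x : Fin n → ℕ, ∀ j, ∑ k, A j k * x k = b j) ↔
    (∃ Q : Fin n → MvPolynomial (Fin m) ℝ,
      ((∏ j, (X j : MvPolynomial (Fin m) ℝ) ^ b j) - 1 =
        ∑ k, Q k * ((∏ j, (X j : MvPolynomial (Fin m) ℝ) ^ A j k) - 1)) ∧
      (∀ k d, 0 ≤ MvPolynomial.coeff d (Q k)) ∧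
      (∀ k, ∀ d ∈ (Q k).support, ∀ j, d j ≤ β j - A j k)) := by
  constructor
  · rintro ⟨x, hx⟩
    exact farkas_fwd A β b hb hA x hx
  · rintro ⟨Q, heq, hpos, hsupp⟩
    exact farkas_rev A β b hb hA Q heq hpos hsupp

end
end

section
/- Let β, b ∈ ℕ^m and A ∈ ℕ^{m×n} with columns A_1,…,A_n satisfy b ≤ β and A_k ≤ β for all 1 ≤ k ≤ n. Then the linear system Ax = b has a solution x ∈ ℕ^n if and only if there exists a real vector 𝐲 ≥ 0 (indexed by the pairs (k,u), 1 ≤ k ≤ n, u ∈ ℕ^m, u ≤ β − A_k) such that Θ𝐲 = 𝐛, where Θ[w;(k,u)] = −1 if w = u, +1 if w = u + A_k, 0 otherwise, and 𝐛[w] = (1 if w = b else 0) − (1 if w = 0 else 0), for all w ∈ ℕ^m with w ≤ β. -/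
/-- Row index set: vectors `w ∈ ℕ^m` with `w ≤ β` (entrywise). -/
abbrev RowIdx (m : ℕ) (β : Fin m → ℕ) : Type := ∀ j : Fin m, Fin (β j + 1)

/-- Column index set: pairs `(k, u)` with `1 ≤ k ≤ n` and `u ∈ ℕ^m`, `u ≤ β - A_k`. -/
abbrev ColIdx (m n : ℕ) (β : Fin m → ℕ) (A : Matrix (Fin m) (Fin n) ℕ) : Type :=
  Σ k : Fin n, ∀ j : Fin m, Fin (β j - A j k + 1)

/-- The network matrix `Θ`: `Θ[w;(k,u)] = -1` if `w = u`, `+1` if `w = u + A_k`,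
and `0` otherwise. -/
noncomputable def theta (m n : ℕ) (β : Fin m → ℕ) (A : Matrix (Fin m) (Fin n) ℕ) :
    Matrix (RowIdx m β) (ColIdx m n β A) ℝ := Matrix.of fun w c =>
  if (fun j => (w j : ℕ)) = (fun j => (c.2 j : ℕ)) then -1
  else if (fun j => (w j : ℕ)) = (fun j => (c.2 j : ℕ) + A j c.1) then 1 else 0

/-- The vector `𝐛`: `𝐛[w] = (1 if w = b else 0) - (1 if w = 0 else 0)`. -/
noncomputable def bvec (m : ℕ) (β b : Fin m → ℕ) : RowIdx m β → ℝ := fun w =>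
  (if (fun j => (w j : ℕ)) = b then 1 else 0)
    - (if (fun j => (w j : ℕ)) = (fun _ => (0 : ℕ)) then 1 else 0)

/-! `Θ` is the incidence matrix of the network on the nodes `w ≤ β` with an arc `u → u + A_k` for
every column `k` (an arc with `A_k = 0` is a loop whose column is `-δ_u`), so `Θ y = 𝐛` with
`y ≥ 0` says that `y` is a unit flow from `0` to `b`. A solution `x` of `A x = b` is a path from
`0` to `b` using `x_k` arcs of type `k`, and one unit sent along it is such a flow. Conversely,
the set `R` of nodes from which `b` is reachable has no entering arcs, so for `y ≥ 0` the total of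
`Θ y` over `R` is nonpositive; as this total is `[b ∈ R] - [0 ∈ R]`, the node `0` lies in `R`. -/

open Matrix

variable {m n : ℕ} {β : Fin m → ℕ} {A : Matrix (Fin m) (Fin n) ℕ}

def RowIdx.toVec (w : RowIdx m β) : Fin m → ℕ := fun j => w j

theorem RowIdx.toVec_injective : Function.Injective (RowIdx.toVec (β := β)) :=
  fun _ _ h => funext fun j => Fin.ext (congrFun h j)

theorem RowIdx.toVec_le (w : RowIdx m β) : w.toVec ≤ β :=
  fun j => Nat.le_of_lt_succ (w j).isLt

def ColIdx.tail (c : ColIdx m n β A) : Fin m → ℕ := fun j => c.2 j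

def ColIdx.head (c : ColIdx m n β A) : Fin m → ℕ := c.tail + A.col c.1

theorem ColIdx.tail_le (c : ColIdx m n β A) : c.tail ≤ β :=
  fun j => (Nat.le_of_lt_succ (c.2 j).isLt).trans (Nat.sub_le _ _)

noncomputable def nodeVec (g : Fin m → ℕ) : RowIdx m β → ℝ :=
  fun w => if w.toVec = g then 1 else 0

theorem bvec_eq (b : Fin m → ℕ) : bvec m β b = nodeVec b - nodeVec 0 := rfl

theorem theta_apply (w : RowIdx m β) (c : ColIdx m n β A) :
    theta m n β A w c = if w.toVec = c.tail then -1 else if w.toVec = c.head then 1 else 0 :=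
  rfl

theorem theta_apply_le (w : RowIdx m β) (c : ColIdx m n β A) :
    theta m n β A w c ≤ nodeVec c.head w - nodeVec c.tail w := by
  rw [theta_apply, nodeVec, nodeVec]
  split_ifs <;> norm_num

theorem theta_col_of_tail_ne_head {c : ColIdx m n β A} (hc : c.tail ≠ c.head) :
    (theta m n β A).col c = nodeVec c.head - nodeVec c.tail := by
  ext w
  rw [col_apply, theta_apply, Pi.sub_apply, nodeVec, nodeVec]
  split_ifs <;> simp_all

theorem dotProduct_nodeVec {φ : (Fin m → ℕ) → ℝ} {g : Fin m → ℕ} (hg : g ≤ β) :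
    (fun w : RowIdx m β => φ w.toVec) ⬝ᵥ nodeVec g = φ g := by
  let w₀ : RowIdx m β := fun j => ⟨g j, Nat.lt_succ_of_le (hg j)⟩
  have hw : w₀.toVec = g := rfl
  rw [dotProduct, Finset.sum_eq_single w₀ (fun w _ hne => ?_) (by simp)]
  · simp [nodeVec, hw]
  · rw [nodeVec, if_neg fun h => hne (RowIdx.toVec_injective (h.trans hw.symm)), mul_zero]

theorem dotProduct_nodeVec_le {φ : (Fin m → ℕ) → ℝ} (hφ : 0 ≤ φ) (g : Fin m → ℕ) :
    (fun w : RowIdx m β => φ w.toVec) ⬝ᵥ nodeVec g ≤ φ g := by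
  by_cases hg : g ≤ β
  · exact (dotProduct_nodeVec hg).le
  · refine (Finset.sum_eq_zero fun w _ => ?_).trans_le (hφ g)
    rw [nodeVec, if_neg fun h : w.toVec = g => hg (h ▸ w.toVec_le), mul_zero]

theorem vecMul_theta_le {φ : (Fin m → ℕ) → ℝ} (hφ : 0 ≤ φ) (c : ColIdx m n β A) :
    ((fun w => φ w.toVec) ᵥ* theta m n β A) c ≤ φ c.head - φ c.tail :=
  calc ((fun w => φ w.toVec) ᵥ* theta m n β A) c
      ≤ (fun w => φ w.toVec) ⬝ᵥ (nodeVec c.head - nodeVec c.tail) :=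
        Finset.sum_le_sum fun w _ => mul_le_mul_of_nonneg_left (theta_apply_le w c) (hφ _)
    _ ≤ φ c.head - φ c.tail := by
        rw [dotProduct_sub, dotProduct_nodeVec c.tail_le]
        exact sub_le_sub_right (dotProduct_nodeVec_le hφ _) _

theorem dotProduct_theta_mulVec_nonpos {φ : (Fin m → ℕ) → ℝ} (hφ : 0 ≤ φ)
    (hmono : ∀ c : ColIdx m n β A, φ c.head ≤ φ c.tail)
    {y : ColIdx m n β A → ℝ} (hy : ∀ c, 0 ≤ y c) :
    (fun w => φ w.toVec) ⬝ᵥ (theta m n β A *ᵥ y) ≤ 0 := by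
  rw [dotProduct_mulVec]
  exact Finset.sum_nonpos fun c _ => mul_nonpos_of_nonpos_of_nonneg
    ((vecMul_theta_le hφ c).trans (sub_nonpos.2 (hmono c))) (hy c)

variable (β A) in
def HasUnitFlow (g : Fin m → ℕ) : Prop :=
  ∃ y : ColIdx m n β A → ℝ, (∀ c, 0 ≤ y c) ∧ theta m n β A *ᵥ y = nodeVec g - nodeVec 0

theorem HasUnitFlow.zero : HasUnitFlow β A 0 :=
  ⟨0, fun _ => le_rfl, by rw [mulVec_zero, sub_self]⟩

theorem HasUnitFlow.add_col {u : Fin m → ℕ} (hu : HasUnitFlow β A u) (k : Fin n)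
    (hle : u + A.col k ≤ β) : HasUnitFlow β A (u + A.col k) := by
  by_cases hk : A.col k = 0
  · rwa [hk, add_zero]
  obtain ⟨y, hy, hΘy⟩ := hu
  let c : ColIdx m n β A :=
    ⟨k, fun j => ⟨u j, Nat.lt_succ_of_le (Nat.le_sub_of_add_le (hle j))⟩⟩
  have htail : c.tail = u := rfl
  have hhead : c.head = u + A.col k := rfl
  have hc : c.tail ≠ c.head := by rwa [htail, hhead, ne_eq, left_eq_add]
  have hsingle : 0 ≤ (Pi.single c 1 : ColIdx m n β A → ℝ) := Pi.single_nonneg.2 zero_le_one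
  refine ⟨y + Pi.single c 1, fun c' => add_nonneg (hy c') (hsingle c'), ?_⟩
  rw [mulVec_add, mulVec_single_one, hΘy, theta_col_of_tail_ne_head hc, htail, hhead]
  abel

theorem hasUnitFlow_mulVec (x : Fin n → ℕ) (hx : A *ᵥ x ≤ β) : HasUnitFlow β A (A *ᵥ x) := by
  induction x using WellFoundedLT.induction with
  | _ x ih =>
  by_cases hx0 : x = 0
  · rw [hx0, mulVec_zero]
    exact HasUnitFlow.zero
  obtain ⟨k, hk⟩ : ∃ k, x k ≠ 0 := Function.ne_iff.1 hx0
  have hsplit : x = (x - Pi.single k 1) + Pi.single k 1 := by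
    ext i
    rcases eq_or_ne i k with rfl | hi
    · have := Nat.pos_of_ne_zero hk
      simp only [Pi.add_apply, Pi.sub_apply, Pi.single_eq_same]
      omega
    · simp [hi]
  have hlt : x - Pi.single k 1 < x := lt_of_le_of_ne tsub_le_self fun h => by
    have := congrFun h k
    simp only [Pi.sub_apply, Pi.single_eq_same] at this
    omega
  have hAx : A *ᵥ x = A *ᵥ (x - Pi.single k 1) + A.col k := by
    conv_lhs => rw [hsplit]
    rw [mulVec_add, mulVec_single_one]
  rw [hAx] at hx ⊢
  exact (ih _ hlt (le_trans le_self_add hx)).add_col k hx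

theorem HasUnitFlow.exists_mulVec_eq {g : Fin m → ℕ} (hflow : HasUnitFlow β A g) (hg : g ≤ β) :
    ∃ x, A *ᵥ x = g := by
  classical
  obtain ⟨y, hy, hΘy⟩ := hflow
  -- the indicator of the nodes from which `g` is reachable; no arc enters that set
  let φ : (Fin m → ℕ) → ℝ := fun v => if ∃ x, v + A *ᵥ x = g then 1 else 0
  have hφ : 0 ≤ φ := fun v => by dsimp only [φ]; split_ifs <;> norm_num
  have hmono (c : ColIdx m n β A) : φ c.head ≤ φ c.tail := by
    by_cases h : ∃ x, c.head + A *ᵥ x = g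
    · obtain ⟨x, hx⟩ := h
      have : ∃ x, c.tail + A *ᵥ x = g :=
        ⟨x + Pi.single c.1 1, by rw [mulVec_add, mulVec_single_one, ← hx, ColIdx.head]; abel⟩
      simp only [φ, if_pos this]
      split_ifs <;> norm_num
    · simp only [φ, if_neg h]
      exact hφ _
  have key := dotProduct_theta_mulVec_nonpos hφ hmono hy
  rw [hΘy, dotProduct_sub, dotProduct_nodeVec hg, dotProduct_nodeVec (zero_le (a := β))] at key
  have hφg : φ g = 1 := if_pos ⟨0, by simp⟩
  by_contra hno
  have hφ0 : φ 0 = 0 := if_neg (by simpa using hno)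
  linarith

theorem exists_mulVec_eq_iff_hasUnitFlow {b : Fin m → ℕ} (hb : b ≤ β) :
    (∃ x, A *ᵥ x = b) ↔ HasUnitFlow β A b :=
  ⟨fun ⟨x, hx⟩ => hx ▸ hasUnitFlow_mulVec x (hx ▸ hb), fun h => h.exists_mulVec_eq hb⟩

theorem stmt_5_general (m n : ℕ)
    (A : Matrix (Fin m) (Fin n) ℕ) (β b : Fin m → ℕ)
    (hb : ∀ j, b j ≤ β j) :
    (∃ x : Fin n → ℕ, ∀ j, ∑ k, A j k * x k = b j) ↔
    (∃ y : ColIdx m n β A → ℝ, (∀ c, 0 ≤ y c) ∧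
      (theta m n β A).mulVec y = bvec m β b) := by
  rw [bvec_eq]
  exact (exists_congr fun x => funext_iff.symm).trans (exists_mulVec_eq_iff_hasUnitFlow hb)

/-- `Ax = b` has a solution `x ∈ ℕ^n` iff `Θ 𝐲 = 𝐛` for some real vector `𝐲 ≥ 0`. -/
theorem stmt_5 (m n : ℕ) (hm : 0 < m) (hn : 0 < n)
    (A : Matrix (Fin m) (Fin n) ℕ) (β b : Fin m → ℕ)
    (hb : ∀ j, b j ≤ β j) (hA : ∀ k j, A j k ≤ β j) :
    (∃ x : Fin n → ℕ, ∀ j, ∑ k, A j k * x k = b j) ↔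
    (∃ y : ColIdx m n β A → ℝ, (∀ c, 0 ≤ y c) ∧
      (theta m n β A).mulVec y = bvec m β b) :=
  stmt_5_general m n A β b hb
end

section
/- Let β, b ∈ ℕ^m and A ∈ ℕ^{m×n} with columns A_1,…,A_n satisfy b ≤ β and A_k ≤ β for all 1 ≤ k ≤ n. Then the linear system Ax = b has a solution x ∈ ℕ^n if and only if there exist real numbers y[k,u] ≥ 0 (for 1 ≤ k ≤ n and u ∈ ℕ^m with u ≤ β − A_k) such that for every z ∈ ℕ^m with z ≤ β, b^z − 0^z = Σ_{k=1}^n Σ_{u ≤ β−A_k} y[k,u]·((u+A_k)^z − u^z). -/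
open Finset

private lemma interp1 (N p : ℕ) :
    ∃ a : Fin (N + 1) → ℝ, ∀ w : ℕ, w ≤ N →
      ∑ t : Fin (N + 1), a t * (w : ℝ) ^ (t : ℕ) = if w = p then 1 else 0 := by
  classical
  set v : ℕ → ℝ := fun i => (i : ℝ) with hv
  set r : ℕ → ℝ := fun w => if w = p then 1 else 0 with hrdef
  set P : Polynomial ℝ := Lagrange.interpolate (Finset.range (N + 1)) v r with hP
  have hinj : Set.InjOn v (Finset.range (N + 1)) := fun a _ b _ h => Nat.cast_injective h
  have hdeg : P.natDegree < N + 1 := by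
    by_cases h0 : P = 0
    · simp [h0]
    · refine (Polynomial.natDegree_lt_iff_degree_lt h0).2 ?_
      have h := Lagrange.degree_interpolate_lt r hinj
      rw [Finset.card_range] at h
      exact_mod_cast h
  refine ⟨fun t => P.coeff t, fun w hw => ?_⟩
  have he : P.eval (v w) = r w :=
    Lagrange.eval_interpolate_at_node r hinj (Finset.mem_range.2 (Nat.lt_succ_of_le hw))
  have h2 := Polynomial.eval_eq_sum_range' hdeg (v w)
  rw [he] at h2
  rw [Fin.sum_univ_eq_sum_range (fun i => P.coeff i * (w : ℝ) ^ i)]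
  exact h2.symm

set_option maxHeartbeats 1000000 in
private lemma interpm (m : ℕ) (β p : Fin m → ℕ) :
    ∃ a : (∀ j, Fin (β j + 1)) → ℝ, ∀ w : Fin m → ℕ, (∀ j, w j ≤ β j) →
      ∑ z : ∀ j, Fin (β j + 1), a z * ∏ j, (w j : ℝ) ^ (z j : ℕ) =
        if w = p then 1 else 0 := by
  classical
  choose a ha using fun j => interp1 (β j) (p j)
  refine ⟨fun z => ∏ j, a j (z j), fun w hw => ?_⟩
  calc ∑ z : ∀ j, Fin (β j + 1), (∏ j, a j (z j)) * ∏ j, (w j : ℝ) ^ (z j : ℕ)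
      = ∑ z : ∀ j, Fin (β j + 1), ∏ j, (a j (z j) * (w j : ℝ) ^ ((z j : ℕ))) := by
        refine Finset.sum_congr rfl fun z _ => ?_
        rw [← Finset.prod_mul_distrib]
    _ = ∏ j, ∑ t : Fin (β j + 1), a j t * (w j : ℝ) ^ (t : ℕ) := (Fintype.prod_sum (fun j (t : Fin (β j + 1)) => a j t * (w j : ℝ) ^ (t : ℕ))).symm
    _ = ∏ j, (if w j = p j then (1:ℝ) else 0) := by
        exact Finset.prod_congr rfl fun j _ => ha j (w j) (hw j)
    _ = if w = p then 1 else 0 := by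
        rw [Finset.prod_boole]
        simp [funext_iff]

set_option maxHeartbeats 1000000 in
private lemma forward_aux (m n : ℕ) (A : Matrix (Fin m) (Fin n) ℕ) (β : Fin m → ℕ)
    (hA : ∀ k j, A j k ≤ β j) :
    ∀ N (x : Fin n → ℕ), (∑ k, x k) = N → (∀ j, ∑ k, A j k * x k ≤ β j) →
    ∃ y : (Σ k : Fin n, ∀ j : Fin m, Fin (β j - A j k + 1)) → ℝ,
      (∀ c, 0 ≤ y c) ∧
      ∀ z : ∀ j : Fin m, Fin (β j + 1),
        (∏ j, ((∑ k, A j k * x k : ℕ) : ℝ) ^ (z j : ℕ)) - (∏ j, (0:ℝ) ^ (z j : ℕ)) =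
          ∑ c : Σ k : Fin n, ∀ j : Fin m, Fin (β j - A j k + 1), y c *
            ((∏ j, (((c.2 j : ℕ) + A j c.1 : ℕ) : ℝ) ^ (z j : ℕ)) -
              ∏ j, ((c.2 j : ℕ) : ℝ) ^ (z j : ℕ)) := by
  classical
  intro N
  induction N with
  | zero =>
    intro x hx _
    have hx0 : ∀ k, x k = 0 := by
      intro k
      exact Finset.sum_eq_zero_iff.mp hx k (mem_univ k)
    refine ⟨0, fun c => le_refl 0, fun z => ?_⟩
    simp [hx0]
  | succ N ih =>
    intro x hx hxb
    have hex : ∃ k₀, 0 < x k₀ := by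
      by_contra h
      push_neg at h
      have : ∑ k, x k = 0 := Finset.sum_eq_zero (fun k _ => Nat.le_zero.mp (h k))
      omega
    obtain ⟨k₀, hk₀⟩ := hex
    set x' : Fin n → ℕ := Function.update x k₀ (x k₀ - 1) with hx'
    have hxx : ∀ k, x k = x' k + (if k = k₀ then 1 else 0) := by
      intro k
      by_cases h : k = k₀
      · subst h; simp [hx']; omega
      · simp [hx', Function.update_of_ne h, h]
    have hsum' : ∑ k, x' k = N := by
      have h1 : ∑ k, x k = (∑ k, x' k) + 1 := by
        rw [Finset.sum_congr rfl (fun k _ => hxx k), Finset.sum_add_distrib]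
        simp
      omega
    have hAx : ∀ j, ∑ k, A j k * x k = (∑ k, A j k * x' k) + A j k₀ := by
      intro j
      rw [Finset.sum_congr rfl (fun k _ => by rw [hxx k])]
      simp only [Nat.mul_add, Finset.sum_add_distrib, mul_ite, mul_one, mul_zero]
      rw [Finset.sum_ite_eq' univ k₀ (fun k => A j k)]
      simp
    have hx'b : ∀ j, ∑ k, A j k * x' k ≤ β j := by
      intro j; have h1 := hAx j; have h2 := hxb j; omega
    obtain ⟨y', hy'0, hy'⟩ := ih x' hsum' hx'b
    have hu : ∀ j, (∑ k, A j k * x' k) < β j - A j k₀ + 1 := by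
      intro j; have h1 := hAx j; have h2 := hxb j; have h3 := hA k₀ j; omega
    set c₀ : (Σ k : Fin n, ∀ j : Fin m, Fin (β j - A j k + 1)) :=
      ⟨k₀, fun j => ⟨∑ k, A j k * x' k, hu j⟩⟩ with hc₀
    refine ⟨fun c => y' c + (if c = c₀ then 1 else 0), fun c =>
      add_nonneg (hy'0 c) (by split <;> norm_num), fun z => ?_⟩
    have hR : ∀ D : (Σ k : Fin n, ∀ j : Fin m, Fin (β j - A j k + 1)) → ℝ,
        ∑ c, (y' c + (if c = c₀ then 1 else 0)) * D c = (∑ c, y' c * D c) + D c₀ := by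
      intro D
      simp only [add_mul, Finset.sum_add_distrib, ite_mul, one_mul, zero_mul]
      rw [Finset.sum_ite_eq' univ c₀ D]
      simp
    rw [hR, ← hy' z]
    have e1 : (∏ j, (((c₀.2 j : ℕ) + A j c₀.1 : ℕ) : ℝ) ^ (z j : ℕ)) =
        ∏ j, ((∑ k, A j k * x k : ℕ) : ℝ) ^ (z j : ℕ) := by
      refine Finset.prod_congr rfl fun j _ => ?_
      have h : ((c₀.2 j : ℕ) + A j c₀.1 : ℕ) = ∑ k, A j k * x k := by
        show (∑ k, A j k * x' k) + A j k₀ = _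
        exact (hAx j).symm
      rw [h]
    have e2 : (∏ j, ((c₀.2 j : ℕ) : ℝ) ^ (z j : ℕ)) =
        ∏ j, ((∑ k, A j k * x' k : ℕ) : ℝ) ^ (z j : ℕ) := rfl
    rw [e1, e2]
    ring

set_option maxHeartbeats 2000000 in
/-- `Ax = b` has a solution `x ∈ ℕ^n` iff there are `y[k,u] ≥ 0` with
`b^z - 0^z = ∑_{k,u} y[k,u]·((u+A_k)^z - u^z)` for every `z ≤ β`. -/
theorem stmt_6 (m n : ℕ) (hm : 0 < m) (hn : 0 < n)
    (A : Matrix (Fin m) (Fin n) ℕ) (β b : Fin m → ℕ)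
    (hb : ∀ j, b j ≤ β j) (hA : ∀ k j, A j k ≤ β j) :
    (∃ x : Fin n → ℕ, ∀ j, ∑ k, A j k * x k = b j) ↔
    (∃ y : (Σ k : Fin n, ∀ j : Fin m, Fin (β j - A j k + 1)) → ℝ,
      (∀ c, 0 ≤ y c) ∧
      (∀ z : ∀ j : Fin m, Fin (β j + 1),
        (∏ j, ((b j : ℝ)) ^ (z j : ℕ)) - (∏ j, (0 : ℝ) ^ (z j : ℕ)) =
          ∑ c : Σ k : Fin n, ∀ j : Fin m, Fin (β j - A j k + 1), y c *
            ((∏ j, (((c.2 j : ℕ) + A j c.1 : ℕ) : ℝ) ^ (z j : ℕ)) -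
              ∏ j, ((c.2 j : ℕ) : ℝ) ^ (z j : ℕ)))) := by
  classical
  constructor
  · rintro ⟨x, hx⟩
    have hxb : ∀ j, ∑ k, A j k * x k ≤ β j := fun j => (hx j) ▸ hb j
    obtain ⟨y, hy0, hy⟩ := forward_aux m n A β hA (∑ k, x k) x rfl hxb
    refine ⟨y, hy0, fun z => ?_⟩
    have h := hy z
    simp only [hx] at h
    exact h
  · rintro ⟨y, hy0, hy⟩
    by_contra hns
    set Sol : (Fin m → ℕ) → Prop := fun p => ∃ x : Fin n → ℕ, ∀ j, ∑ k, A j k * x k = p j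
      with hSol
    set boxF : Finset (Fin m → ℕ) := Fintype.piFinset (fun j => Finset.range (β j + 1))
      with hbox
    set R : Finset (Fin m → ℕ) := boxF.filter Sol with hRdef
    -- the point-mass identity
    have star : ∀ p : Fin m → ℕ, (∀ j, p j ≤ β j) →
        ((if b = p then (1:ℝ) else 0) - (if (fun _ => 0 : Fin m → ℕ) = p then 1 else 0)) =
        ∑ c : Σ k : Fin n, ∀ j : Fin m, Fin (β j - A j k + 1), y c *
          ((if (fun j => (c.2 j : ℕ) + A j c.1) = p then (1:ℝ) else 0) -
           (if (fun j => (c.2 j : ℕ) : Fin m → ℕ) = p then 1 else 0)) := by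
      intro p hpb
      obtain ⟨a, ha⟩ := interpm m β p
      have key : ∑ z : ∀ j : Fin m, Fin (β j + 1),
          a z * ((∏ j, ((b j : ℝ)) ^ (z j : ℕ)) - (∏ j, (0 : ℝ) ^ (z j : ℕ))) =
          ∑ z : ∀ j : Fin m, Fin (β j + 1), a z *
            (∑ c : Σ k : Fin n, ∀ j : Fin m, Fin (β j - A j k + 1), y c *
              ((∏ j, (((c.2 j : ℕ) + A j c.1 : ℕ) : ℝ) ^ (z j : ℕ)) -
                ∏ j, ((c.2 j : ℕ) : ℝ) ^ (z j : ℕ))) :=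
        Finset.sum_congr rfl fun z _ => by rw [hy z]
      have hL : ∑ z : ∀ j : Fin m, Fin (β j + 1),
          a z * ((∏ j, ((b j : ℝ)) ^ (z j : ℕ)) - (∏ j, (0 : ℝ) ^ (z j : ℕ))) =
          (if b = p then (1:ℝ) else 0) - (if (fun _ => 0 : Fin m → ℕ) = p then 1 else 0) := by
        have h1 := ha b hb
        have h2 := ha (fun _ => 0) (fun j => Nat.zero_le _)
        simp only [Nat.cast_zero] at h2
        simp only [mul_sub, Finset.sum_sub_distrib]
        rw [h1, h2]
      have hRc : ∀ c : Σ k : Fin n, ∀ j : Fin m, Fin (β j - A j k + 1),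
          ∑ z : ∀ j : Fin m, Fin (β j + 1), a z * (y c *
              ((∏ j, (((c.2 j : ℕ) + A j c.1 : ℕ) : ℝ) ^ (z j : ℕ)) -
                ∏ j, ((c.2 j : ℕ) : ℝ) ^ (z j : ℕ))) =
          y c * ((if (fun j => (c.2 j : ℕ) + A j c.1) = p then (1:ℝ) else 0) -
           (if (fun j => (c.2 j : ℕ) : Fin m → ℕ) = p then 1 else 0)) := by
        intro c
        have hH : ∀ j, (c.2 j : ℕ) + A j c.1 ≤ β j := by
          intro j
          have h1 : (c.2 j : ℕ) < β j - A j c.1 + 1 := (c.2 j).isLt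
          have h2 := hA c.1 j
          omega
        have hT : ∀ j, (c.2 j : ℕ) ≤ β j := by
          intro j
          have h1 : (c.2 j : ℕ) < β j - A j c.1 + 1 := (c.2 j).isLt
          have h2 := hA c.1 j
          omega
        have h1 := ha (fun j => (c.2 j : ℕ) + A j c.1) hH
        have h2 := ha (fun j => (c.2 j : ℕ)) hT
        push_cast at h1
        push_cast
        rw [mul_sub (y c), ← h1, ← h2, Finset.mul_sum, Finset.mul_sum, ← Finset.sum_sub_distrib]
        exact Finset.sum_congr rfl fun z _ => by ring
      have hRtot : ∑ z : ∀ j : Fin m, Fin (β j + 1), a z *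
            (∑ c : Σ k : Fin n, ∀ j : Fin m, Fin (β j - A j k + 1), y c *
              ((∏ j, (((c.2 j : ℕ) + A j c.1 : ℕ) : ℝ) ^ (z j : ℕ)) -
                ∏ j, ((c.2 j : ℕ) : ℝ) ^ (z j : ℕ))) =
          ∑ c : Σ k : Fin n, ∀ j : Fin m, Fin (β j - A j k + 1), y c *
            ((if (fun j => (c.2 j : ℕ) + A j c.1) = p then (1:ℝ) else 0) -
             (if (fun j => (c.2 j : ℕ) : Fin m → ℕ) = p then 1 else 0)) := by
        rw [Finset.sum_congr rfl fun z (_ : z ∈ univ) => Finset.mul_sum univ _ (a z)]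
        rw [Finset.sum_comm]
        exact Finset.sum_congr rfl fun c _ => hRc c
      rw [hL, hRtot] at key
      exact key
    -- facts about R
    have h0R : (fun _ => 0 : Fin m → ℕ) ∈ R := by
      rw [hRdef, Finset.mem_filter]
      refine ⟨?_, ⟨fun _ => 0, fun j => by simp⟩⟩
      rw [hbox]
      exact Fintype.mem_piFinset.2 fun j => Finset.mem_range.2 (Nat.succ_pos _)
    have hbR : b ∉ R := by
      rw [hRdef, Finset.mem_filter]
      rintro ⟨-, x, hx⟩
      exact hns ⟨x, hx⟩
    have closed : ∀ c : Σ k : Fin n, ∀ j : Fin m, Fin (β j - A j k + 1),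
        (fun j => (c.2 j : ℕ) : Fin m → ℕ) ∈ R → (fun j => (c.2 j : ℕ) + A j c.1) ∈ R := by
      intro c hc
      rw [hRdef, Finset.mem_filter] at hc ⊢
      obtain ⟨-, x, hx⟩ := hc
      constructor
      · rw [hbox]
        refine Fintype.mem_piFinset.2 fun j => Finset.mem_range.2 ?_
        have h1 : (c.2 j : ℕ) < β j - A j c.1 + 1 := (c.2 j).isLt
        have h2 := hA c.1 j
        omega
      · refine ⟨fun k => x k + (if k = c.1 then 1 else 0), fun j => ?_⟩
        simp only [Nat.mul_add, Finset.sum_add_distrib, mul_ite, mul_one, mul_zero]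
        rw [Finset.sum_ite_eq' univ c.1 (fun k => A j k), hx j]
        simp
    have main : ∑ p ∈ R, ((if b = p then (1:ℝ) else 0) -
          (if (fun _ => 0 : Fin m → ℕ) = p then 1 else 0)) =
        ∑ p ∈ R, ∑ c : Σ k : Fin n, ∀ j : Fin m, Fin (β j - A j k + 1), y c *
          ((if (fun j => (c.2 j : ℕ) + A j c.1) = p then (1:ℝ) else 0) -
           (if (fun j => (c.2 j : ℕ) : Fin m → ℕ) = p then 1 else 0)) := by
      refine Finset.sum_congr rfl fun p hp => ?_
      refine star p fun j => ?_
      have hpb := (Finset.mem_filter.mp (hRdef ▸ hp)).1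
      have := Finset.mem_range.mp (Fintype.mem_piFinset.mp (hbox ▸ hpb) j)
      omega
    have hLeft : ∑ p ∈ R, ((if b = p then (1:ℝ) else 0) -
        (if (fun _ => 0 : Fin m → ℕ) = p then 1 else 0)) = -1 := by
      rw [Finset.sum_sub_distrib, Finset.sum_ite_eq R b (fun _ => (1:ℝ)),
        Finset.sum_ite_eq R (fun _ => 0 : Fin m → ℕ) (fun _ => (1:ℝ))]
      rw [if_neg hbR, if_pos h0R]
      norm_num
    have hRight : (0:ℝ) ≤ ∑ p ∈ R, ∑ c : Σ k : Fin n, ∀ j : Fin m, Fin (β j - A j k + 1), y c *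
          ((if (fun j => (c.2 j : ℕ) + A j c.1) = p then (1:ℝ) else 0) -
           (if (fun j => (c.2 j : ℕ) : Fin m → ℕ) = p then 1 else 0)) := by
      rw [Finset.sum_comm]
      refine Finset.sum_nonneg fun c _ => ?_
      rw [← Finset.mul_sum, Finset.sum_sub_distrib,
        Finset.sum_ite_eq R (fun j => (c.2 j : ℕ) + A j c.1) (fun _ => (1:ℝ)),
        Finset.sum_ite_eq R (fun j => (c.2 j : ℕ) : Fin m → ℕ) (fun _ => (1:ℝ))]
      refine mul_nonneg (hy0 c) ?_
      by_cases hT : (fun j => (c.2 j : ℕ) : Fin m → ℕ) ∈ R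
      · rw [if_pos hT, if_pos (closed c hT)]; norm_num
      · rw [if_neg hT]
        split <;> norm_num
    rw [hLeft] at main
    rw [← main] at hRight
    linarith
end

section
/- Let β, b ∈ ℕ^m and A ∈ ℕ^{m×n} with columns A_1,…,A_n satisfy b ≤ β and A_k ≤ β for all 1 ≤ k ≤ n. Then the linear system Ax = b has a solution x ∈ ℕ^n if and only if there exist real numbers y[k,u] ≥ 0 (for 1 ≤ k ≤ n and u ∈ ℕ^m with u ≤ β − A_k) such that for every z ∈ ℕ^m with z ≤ β, z^b − 1 = Σ_{k=1}^n Σ_{u ≤ β−A_k} y[k,u]·(z^{u+A_k} − z^u). -/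
private lemma sumdelta {α : Type*} [Fintype α] [DecidableEq α] (g : α → ℝ) (w₀ : α) :
    ∑ w, (if w = w₀ then (1:ℝ) else 0) * g w = g w₀ := by
  rw [Finset.sum_eq_single w₀]
  · simp
  · intro bb _ hbb; rw [if_neg hbb, zero_mul]
  · simp

private lemma uni {N : ℕ} (d : Fin (N + 1) → ℝ)
    (h : ∀ t : Fin (N + 1), ∑ i, d i * ((t : ℕ) : ℝ) ^ (i : ℕ) = 0) : ∀ i, d i = 0 := by
  classical
  set p : Polynomial ℝ := ∑ i : Fin (N + 1), Polynomial.C (d i) * Polynomial.X ^ (i : ℕ) with hp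
  have hdeg : p.natDegree < N + 1 := by
    apply Nat.lt_succ_of_le
    apply Polynomial.natDegree_sum_le_of_forall_le
    intro i _
    exact (Polynomial.natDegree_C_mul_X_pow_le (d i) (i : ℕ)).trans (Nat.lt_succ_iff.mp i.isLt)
  have heval : ∀ t : Fin (N + 1), p.eval ((t : ℕ) : ℝ) = 0 := by
    intro t
    rw [hp]
    simp only [Polynomial.eval_finset_sum, Polynomial.eval_mul, Polynomial.eval_C,
      Polynomial.eval_pow, Polynomial.eval_X]
    exact h t
  have hinj : Function.Injective (fun t : Fin (N + 1) => ((t : ℕ) : ℝ)) := by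
    intro a bb hab
    exact Fin.ext (Nat.cast_injective hab)
  have hz : p = 0 :=
    Polynomial.eq_zero_of_natDegree_lt_card_of_eval_eq_zero p hinj heval (by simpa using hdeg)
  intro i
  have hco : p.coeff i = d i := by
    rw [hp, Polynomial.finset_sum_coeff, Finset.sum_eq_single i]
    · simp
    · intro j _ hj
      rw [Polynomial.coeff_C_mul, Polynomial.coeff_X_pow,
        if_neg (fun hh => hj (Fin.ext hh.symm)), mul_zero]
    · simp
  rw [← hco, hz, Polynomial.coeff_zero]

private lemma grid_indep : ∀ (m : ℕ) (β : Fin m → ℕ) (c : (∀ j, Fin (β j + 1)) → ℝ),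
    (∀ z : ∀ j, Fin (β j + 1), ∑ w, c w * ∏ j, ((z j : ℕ) : ℝ) ^ (w j : ℕ) = 0) →
    ∀ w, c w = 0 := by
  intro m
  induction m with
  | zero =>
    intro β c h w
    have h0 := h w
    simp only [Finset.univ_unique, Finset.sum_singleton, Fin.prod_univ_zero, mul_one] at h0
    exact (congrArg c (Subsingleton.elim w _)).trans h0
  | succ m ih =>
    intro β c h w
    have step1 : ∀ (z' : ∀ j : Fin m, Fin (β j.succ + 1)) (t : Fin (β 0 + 1)),
        ∑ w' : ∀ j : Fin m, Fin (β j.succ + 1),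
          c (Fin.cons t w') * ∏ j, ((z' j : ℕ) : ℝ) ^ (w' j : ℕ) = 0 := by
      intro z'
      apply uni
      intro s
      have h0 := h (Fin.cons s z')
      rw [← Equiv.sum_comp (Fin.consEquiv (fun j => Fin (β j + 1)))] at h0
      rw [Fintype.sum_prod_type] at h0
      rw [← h0]
      apply Finset.sum_congr rfl
      intro t _
      rw [Finset.sum_mul]
      apply Finset.sum_congr rfl
      intro w' _
      show (c (Fin.cons t w') * ∏ j, ((z' j : ℕ) : ℝ) ^ (w' j : ℕ)) * ((s : ℕ) : ℝ) ^ (t : ℕ)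
        = c (Fin.cons t w') * ∏ j, (((Fin.cons s z' : ∀ j : Fin (m+1), Fin (β j + 1)) j : ℕ) : ℝ)
            ^ ((Fin.cons t w' : ∀ j : Fin (m+1), Fin (β j + 1)) j : ℕ)
      rw [Fin.prod_univ_succ]
      simp only [Fin.cons_zero, Fin.cons_succ]
      ring
    have step2 : ∀ t w', c (Fin.cons t w') = 0 := by
      intro t
      exact ih (fun j => β j.succ) (fun w' => c (Fin.cons t w')) (fun z' => step1 z' t)
    rw [← Fin.cons_self_tail w]
    exact step2 _ _

/-- `Ax = b` has a solution `x ∈ ℕ^n` iff there are `y[k,u] ≥ 0` with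
`z^b - 1 = ∑_{k,u} y[k,u]·(z^{u+A_k} - z^u)` for every `z ∈ ℕ^m`, `z ≤ β`. -/
theorem stmt_7 (m n : ℕ) (hm : 0 < m) (hn : 0 < n)
    (A : Matrix (Fin m) (Fin n) ℕ) (β b : Fin m → ℕ)
    (hb : ∀ j, b j ≤ β j) (hA : ∀ k j, A j k ≤ β j) :
    (∃ x : Fin n → ℕ, ∀ j, ∑ k, A j k * x k = b j) ↔
    (∃ y : (Σ k : Fin n, ∀ j : Fin m, Fin (β j - A j k + 1)) → ℝ,
      (∀ c, 0 ≤ y c) ∧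
      (∀ z : ∀ j : Fin m, Fin (β j + 1),
        (∏ j, ((z j : ℕ) : ℝ) ^ b j) - 1 =
          ∑ c : Σ k : Fin n, ∀ j : Fin m, Fin (β j - A j k + 1), y c *
            ((∏ j, ((z j : ℕ) : ℝ) ^ ((c.2 j : ℕ) + A j c.1)) -
              ∏ j, ((z j : ℕ) : ℝ) ^ (c.2 j : ℕ)))) := by
  classical
  constructor
  · rintro ⟨x, hx⟩
    set S : ℕ → Fin m → ℕ := fun K j => ∑ k : Fin n, if (k : ℕ) < K then A j k * x k else 0
      with hS
    have hS0 : ∀ j, S 0 j = 0 := by intro j; simp [hS]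
    have hSn : ∀ j, S n j = b j := by
      intro j; rw [← hx j]; apply Finset.sum_congr rfl; intro k _; rw [if_pos k.isLt]
    have hstep : ∀ (k : Fin n) (j : Fin m), S ((k : ℕ) + 1) j = S (k : ℕ) j + A j k * x k := by
      intro k j
      have hsplit : ∀ k' : Fin n,
          (if (k' : ℕ) < (k : ℕ) + 1 then A j k' * x k' else 0)
          = (if (k' : ℕ) < (k : ℕ) then A j k' * x k' else 0)
            + (if k' = k then A j k' * x k' else 0) := by
        intro k'
        by_cases hkk : k' = k
        · subst hkk; simp
        · have h' : (k' : ℕ) ≠ (k : ℕ) := fun hh => hkk (Fin.ext hh)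
          rw [if_neg hkk, add_zero]
          by_cases h2 : (k' : ℕ) < (k : ℕ)
          · rw [if_pos h2, if_pos (by omega)]
          · rw [if_neg h2, if_neg (by omega)]
      calc S ((k : ℕ) + 1) j
          = ∑ k' : Fin n, ((if (k' : ℕ) < (k : ℕ) then A j k' * x k' else 0)
            + (if k' = k then A j k' * x k' else 0)) :=
            Finset.sum_congr rfl (fun k' _ => hsplit k')
        _ = S (k : ℕ) j + A j k * x k := by
            rw [Finset.sum_add_distrib, Finset.sum_ite_eq' Finset.univ k
              (fun k' => A j k' * x k'), if_pos (Finset.mem_univ k)]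
    have hSle : ∀ (K : ℕ) (j : Fin m), S K j ≤ b j := by
      intro K j; rw [← hx j]
      apply Finset.sum_le_sum; intro k _
      split
      · exact le_rfl
      · exact Nat.zero_le _
    have hbound : ∀ (k : Fin n) (i : ℕ), i < x k →
        ∀ j, S (k : ℕ) j + i * A j k + A j k ≤ β j := by
      intro k i hi j
      have h2 : (i + 1) * A j k ≤ x k * A j k := Nat.mul_le_mul_right _ hi
      calc S (k : ℕ) j + i * A j k + A j k = S (k : ℕ) j + (i + 1) * A j k := by ring
        _ ≤ S (k : ℕ) j + x k * A j k := Nat.add_le_add_left h2 _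
        _ = S ((k : ℕ) + 1) j := by rw [hstep k j, mul_comm]
        _ ≤ b j := hSle _ j
        _ ≤ β j := hb j
    have hmem : ∀ (k : Fin n) (i : Fin (x k)) (j : Fin m),
        S (k : ℕ) j + (i : ℕ) * A j k < β j - A j k + 1 := by
      intro k i j
      exact Nat.lt_succ_of_le (Nat.le_sub_of_add_le (hbound k i i.isLt j))
    let f : (k : Fin n) → Fin (x k) → (∀ j, Fin (β j - A j k + 1)) :=
      fun k i j => ⟨S (k : ℕ) j + (i : ℕ) * A j k, hmem k i j⟩
    refine ⟨fun c => ((Finset.univ.filter (fun i : Fin (x c.1) => f c.1 i = c.2)).card : ℝ),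
      fun c => Nat.cast_nonneg _, ?_⟩
    intro z
    set Z : (Fin m → ℕ) → ℝ := fun v => ∏ j, ((z j : ℕ) : ℝ) ^ (v j) with hZ
    have main : ∀ k : Fin n,
        ∑ u : ∀ j, Fin (β j - A j k + 1),
          ((Finset.univ.filter (fun i : Fin (x k) => f k i = u)).card : ℝ) *
            (Z (fun j => (u j : ℕ) + A j k) - Z (fun j => (u j : ℕ)))
        = Z (S ((k : ℕ) + 1)) - Z (S (k : ℕ)) := by
      intro k
      have h1 : ∀ u : ∀ j, Fin (β j - A j k + 1),
          ((Finset.univ.filter (fun i : Fin (x k) => f k i = u)).card : ℝ) *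
            (Z (fun j => (u j : ℕ) + A j k) - Z (fun j => (u j : ℕ)))
          = ∑ _i ∈ Finset.univ.filter (fun i : Fin (x k) => f k i = u),
              (Z (fun j => (u j : ℕ) + A j k) - Z (fun j => (u j : ℕ))) := by
        intro u
        rw [Finset.sum_const, nsmul_eq_mul]
      rw [Finset.sum_congr rfl (fun u _ => h1 u),
        Finset.sum_fiberwise' Finset.univ (f k)
          (fun u => Z (fun j => (u j : ℕ) + A j k) - Z (fun j => (u j : ℕ)))]
      have h2 : ∀ i : Fin (x k),
          Z (fun j => ((f k i) j : ℕ) + A j k) - Z (fun j => ((f k i) j : ℕ))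
          = Z (fun j => S (k : ℕ) j + ((i : ℕ) + 1) * A j k)
            - Z (fun j => S (k : ℕ) j + (i : ℕ) * A j k) := by
        intro i
        congr 1
        · apply Finset.prod_congr rfl
          intro j _
          congr 1
          show S (k : ℕ) j + (i : ℕ) * A j k + A j k = _
          ring
      rw [Finset.sum_congr rfl (fun i _ => h2 i), Fin.sum_univ_eq_sum_range
        (fun i => Z (fun j => S (k : ℕ) j + (i + 1) * A j k)
          - Z (fun j => S (k : ℕ) j + i * A j k)),
        Finset.sum_range_sub (fun i => Z (fun j => S (k : ℕ) j + i * A j k))]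
      congr 1
      · apply Finset.prod_congr rfl
        intro j _
        congr 1
        rw [hstep k j]
        ring
      · apply Finset.prod_congr rfl
        intro j _
        simp
    rw [← Finset.univ_sigma_univ, Finset.sum_sigma]
    have hterm : ∀ k : Fin n, ∀ u : ∀ j, Fin (β j - A j k + 1),
        ((Finset.univ.filter (fun i : Fin (x k) =>
            f k i = (⟨k, u⟩ : Σ k : Fin n, ∀ j : Fin m, Fin (β j - A j k + 1)).2)).card : ℝ) *
          ((∏ j, ((z j : ℕ) : ℝ) ^ ((u j : ℕ) + A j k)) - ∏ j, ((z j : ℕ) : ℝ) ^ (u j : ℕ))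
        = ((Finset.univ.filter (fun i : Fin (x k) => f k i = u)).card : ℝ) *
            (Z (fun j => (u j : ℕ) + A j k) - Z (fun j => (u j : ℕ))) := fun k u => rfl
    rw [Finset.sum_congr rfl (fun k _ => Finset.sum_congr rfl (fun u _ => hterm k u))]
    rw [Finset.sum_congr rfl (fun k (_ : k ∈ Finset.univ) => main k)]
    rw [Fin.sum_univ_eq_sum_range (fun K => Z (S (K + 1)) - Z (S K)),
      Finset.sum_range_sub (fun K => Z (S K))]
    congr 1
    · apply Finset.prod_congr rfl
      intro j _
      rw [hSn j]
    · rw [hZ]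
      simp only [hS0]
      simp
  · rintro ⟨y, hy0, hy⟩
    let ι : (Fin m → ℕ) → (∀ j : Fin m, Fin (β j + 1)) :=
      fun v j => ⟨min (v j) (β j), Nat.lt_succ_of_le (min_le_right _ _)⟩
    have ιval : ∀ (v : Fin m → ℕ) (j : Fin m), v j ≤ β j → ((ι v j : ℕ)) = v j :=
      fun v j hj => min_eq_left hj
    have hu : ∀ (c : Σ k : Fin n, ∀ j : Fin m, Fin (β j - A j k + 1)) (j : Fin m),
        (c.2 j : ℕ) ≤ β j - A j c.1 := fun c j => Nat.lt_succ_iff.mp (c.2 j).isLt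
    have hu1 : ∀ (c : Σ k : Fin n, ∀ j : Fin m, Fin (β j - A j k + 1)) (j : Fin m),
        (c.2 j : ℕ) + A j c.1 ≤ β j := by
      intro c j
      have h1 := Nat.add_le_add_right (hu c j) (A j c.1)
      rwa [Nat.sub_add_cancel (hA c.1 j)] at h1
    have hu2 : ∀ (c : Σ k : Fin n, ∀ j : Fin m, Fin (β j - A j k + 1)) (j : Fin m),
        (c.2 j : ℕ) ≤ β j := fun c j => le_trans (hu c j) (Nat.sub_le _ _)
    let upA : (Σ k : Fin n, ∀ j : Fin m, Fin (β j - A j k + 1)) → (Fin m → ℕ) :=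
      fun c => fun j => (c.2 j : ℕ) + A j c.1
    let uv : (Σ k : Fin n, ∀ j : Fin m, Fin (β j - A j k + 1)) → (Fin m → ℕ) :=
      fun c => fun j => (c.2 j : ℕ)
    let e : (∀ j : Fin m, Fin (β j + 1)) → ℝ := fun w =>
      (if w = ι b then 1 else 0) - (if w = ι (fun _ => 0) then 1 else 0)
      - ∑ c, y c * ((if w = ι (upA c) then 1 else 0) - (if w = ι (uv c) then 1 else 0))
    have expand : ∀ g : (∀ j : Fin m, Fin (β j + 1)) → ℝ, ∑ w, e w * g w
        = g (ι b) - g (ι (fun _ => 0)) - ∑ c, y c * (g (ι (upA c)) - g (ι (uv c))) := by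
      intro g
      have h1 : ∀ w, e w * g w
          = ((if w = ι b then 1 else 0) * g w - (if w = ι (fun _ => 0) then 1 else 0) * g w)
            - ∑ c, (y c * ((if w = ι (upA c) then 1 else 0) * g w)
              - y c * ((if w = ι (uv c) then 1 else 0) * g w)) := by
        intro w
        show ((if w = ι b then (1:ℝ) else 0) - (if w = ι (fun _ => 0) then 1 else 0)
          - ∑ c, y c * ((if w = ι (upA c) then 1 else 0) - (if w = ι (uv c) then 1 else 0)))
            * g w = _
        rw [sub_mul, sub_mul, Finset.sum_mul]
        congr 1
        apply Finset.sum_congr rfl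
        intro c _
        ring
      rw [Finset.sum_congr rfl (fun w _ => h1 w), Finset.sum_sub_distrib,
        Finset.sum_sub_distrib, sumdelta, sumdelta, Finset.sum_comm]
      congr 1
      apply Finset.sum_congr rfl
      intro c _
      rw [Finset.sum_sub_distrib, ← Finset.mul_sum, ← Finset.mul_sum, sumdelta, sumdelta,
        ← mul_sub]
    have he : ∀ w, e w = 0 := by
      apply grid_indep m β
      intro z
      rw [expand (fun w => ∏ j, ((z j : ℕ) : ℝ) ^ (w j : ℕ))]
      have e1 : (∏ j, ((z j : ℕ) : ℝ) ^ ((ι b) j : ℕ)) = ∏ j, ((z j : ℕ) : ℝ) ^ b j :=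
        Finset.prod_congr rfl (fun j _ => by rw [ιval b j (hb j)])
      have e2 : (∏ j, ((z j : ℕ) : ℝ) ^ ((ι (fun _ => 0)) j : ℕ)) = 1 := by
        apply Finset.prod_eq_one
        intro j _
        rw [ιval (fun _ => 0) j (Nat.zero_le _)]
        exact pow_zero _
      have e3 : ∀ c, (∏ j, ((z j : ℕ) : ℝ) ^ ((ι (upA c)) j : ℕ))
          = ∏ j, ((z j : ℕ) : ℝ) ^ ((c.2 j : ℕ) + A j c.1) :=
        fun c => Finset.prod_congr rfl (fun j _ => by rw [ιval (upA c) j (hu1 c j)])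
      have e4 : ∀ c, (∏ j, ((z j : ℕ) : ℝ) ^ ((ι (uv c)) j : ℕ))
          = ∏ j, ((z j : ℕ) : ℝ) ^ (c.2 j : ℕ) :=
        fun c => Finset.prod_congr rfl (fun j _ => by rw [ιval (uv c) j (hu2 c j)])
      simp only [e1, e2, e3, e4]
      rw [hy z, sub_self]
    let Sol : (Fin m → ℕ) → Prop := fun v => ∃ x : Fin n → ℕ, ∀ j, ∑ k, A j k * x k = v j
    let φ : (∀ j : Fin m, Fin (β j + 1)) → ℝ := fun w => if Sol (fun j => (w j : ℕ)) then 1 else 0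
    have hphi := expand φ
    rw [Finset.sum_eq_zero (fun w _ => by rw [he w, zero_mul])] at hphi
    have hφ0 : φ (ι (fun _ => 0)) = 1 := by
      apply if_pos
      refine ⟨fun _ => 0, fun j => ?_⟩
      show (∑ k : Fin n, A j k * 0) = ((ι (fun _ => 0) j : ℕ))
      rw [ιval (fun _ => 0) j (Nat.zero_le _)]
      simp
    have hmono : ∀ c, φ (ι (uv c)) ≤ φ (ι (upA c)) := by
      intro c
      have h1 : φ (ι (uv c)) = if Sol (fun j => ((ι (uv c)) j : ℕ)) then (1:ℝ) else 0 := rfl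
      have h2 : φ (ι (upA c)) = if Sol (fun j => ((ι (upA c)) j : ℕ)) then (1:ℝ) else 0 := rfl
      rw [h1, h2]
      by_cases hs : Sol (fun j => ((ι (uv c)) j : ℕ))
      · have hs2 : Sol (fun j => ((ι (upA c)) j : ℕ)) := by
          obtain ⟨x, hx⟩ := hs
          refine ⟨fun k' => x k' + if k' = c.1 then 1 else 0, fun j => ?_⟩
          have hxj : (∑ k, A j k * x k) = ((c.2 j : ℕ)) :=
            (hx j).trans (ιval (uv c) j (hu2 c j))
          show (∑ k' : Fin n, A j k' * (x k' + if k' = c.1 then 1 else 0))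
            = ((ι (upA c) j : ℕ))
          rw [ιval (upA c) j (hu1 c j)]
          have hsplit : ∀ k' : Fin n, A j k' * (x k' + if k' = c.1 then 1 else 0)
              = A j k' * x k' + if k' = c.1 then A j k' else 0 := by
            intro k'; split <;> ring
          rw [Finset.sum_congr rfl (fun k' _ => hsplit k'), Finset.sum_add_distrib,
            Finset.sum_ite_eq' Finset.univ c.1 (fun k' => A j k'),
            if_pos (Finset.mem_univ _), hxj]
        rw [if_pos hs, if_pos hs2]
      · rw [if_neg hs]
        split <;> norm_num
    have hT : (0:ℝ) ≤ ∑ c, y c * (φ (ι (upA c)) - φ (ι (uv c))) :=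
      Finset.sum_nonneg (fun c _ => mul_nonneg (hy0 c) (by linarith [hmono c]))
    by_cases hsol : Sol (fun j => ((ι b) j : ℕ))
    · obtain ⟨x, hx⟩ := hsol
      exact ⟨x, fun j => (hx j).trans (ιval b j (hb j))⟩
    · exfalso
      have hφb : φ (ι b) = 0 := if_neg hsol
      rw [hφb, hφ0] at hphi
      linarith
end

section
/- Let β, b ∈ ℕ^m and A ∈ ℕ^{m×n} with columns A_1,…,A_n satisfy b ≤ β and A_k ≤ β for all k, and let 𝒫 := {𝐲 ∈ ℝ^p : 𝐲 ≥ 0, Θ𝐲 = 𝐛}. Then every extreme point of 𝒫 has all entries in ℕ (i.e., is a nonnegative integer vector). -/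
/-!
The columns of `Θ` are incidence columns `e_w - e_u` (or `-e_u`), and the columns of `Θ` on the
support of an extreme point are linearly independent, since otherwise the point could be moved both
ways along a kernel direction. A nonempty independent family of incidence columns has a row met by
exactly one of them: otherwise every touched row meets at least two columns while every column meets
at most two rows, so there are at most as many touched rows as columns, strictly fewer if some
column is `-e_u`; but independent columns living on the touched rows are at most as many as these
rows, strictly fewer when they all lie in the hyperplane of sum zero. The equation of that row reads
`± y_c = 𝐛_w ∈ ℤ`; setting `y_c = 0` keeps the right-hand side integral, and induction on the
support finishes the proof.
-/

open Finset Function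
open scoped Matrix

section IncidenceColumn

variable {R K : Type*} [DecidableEq R] [Field K]

/-- The column of the arc `u → w` in the incidence matrix of a directed graph. A loop `u = w` gives
`-e_u` rather than `0`, as `theta` does for `A_k = 0`. -/
def IsIncidenceColumn (v : R → K) : Prop :=
  ∃ u w : R, v = fun x => if x = u then -1 else if x = w then 1 else 0

namespace IsIncidenceColumn

variable {v : R → K} (hv : IsIncidenceColumn v)
include hv

theorem apply_mem_bot (x : R) : v x ∈ (⊥ : Subring K) := by
  obtain ⟨u, w, rfl⟩ := hv
  dsimp only
  split_ifs <;> simp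

theorem mul_self_apply_of_ne_zero {x : R} (hx : v x ≠ 0) : v x * v x = 1 := by
  obtain ⟨u, w, rfl⟩ := hv
  dsimp only at hx ⊢
  split_ifs at hx ⊢ <;> simp_all

variable [Fintype R] [DecidableEq K]

theorem card_support_le_two : #{x | v x ≠ 0} ≤ 2 := by
  obtain ⟨u, w, rfl⟩ := hv
  refine (card_le_card fun x hx => ?_).trans (card_le_two (a := u) (b := w))
  simp only [mem_filter, mem_univ, true_and] at hx
  split_ifs at hx with hu hw <;> simp_all

theorem card_support_le_one_or_sum_eq_zero : #{x | v x ≠ 0} ≤ 1 ∨ ∑ x, v x = 0 := by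
  obtain ⟨u, w, rfl⟩ := hv
  by_cases huw : u = w
  · subst huw
    refine .inl ((card_le_card fun x hx => ?_).trans (card_singleton u).le)
    simp only [mem_filter, mem_univ, true_and] at hx
    split_ifs at hx <;> simp_all
  · right
    simp [sum_ite, filter_ne', filter_eq', Ne.symm huw]

end IsIncidenceColumn

end IncidenceColumn

section SpanOfColumns

variable {ι R K : Type*} [Field K] {v : ι → R → K} {x : R → K}

theorem apply_eq_zero_of_mem_span (hx : x ∈ Submodule.span K (Set.range v)) {w : R}
    (hw : ∀ i, v i w = 0) : x w = 0 := by
  refine LinearMap.eqOn_span' (f := LinearMap.proj w) (g := 0) ?_ hx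
  rintro _ ⟨i, rfl⟩
  simp [hw]

theorem sum_eq_zero_of_mem_span [Fintype R] (hx : x ∈ Submodule.span K (Set.range v))
    (hv : ∀ i, ∑ w, v i w = 0) : ∑ w, x w = 0 := by
  suffices (∑ w, LinearMap.proj w : (R → K) →ₗ[K] K) x = 0 by simpa using this
  refine LinearMap.eqOn_span' (g := 0) ?_ hx
  rintro _ ⟨i, rfl⟩
  simpa using hv i

variable [Fintype ι]

theorem LinearIndependent.fintype_card_le_card_of_forall_mem_span (hv : LinearIndependent K v)
    (F : Finset R) (hF : ∀ x ∈ Submodule.span K (Set.range v), (∀ w ∈ F, x w = 0) → x = 0) :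
    Fintype.card ι ≤ #F := by
  have := (hv.map (f := LinearMap.funLeft K K ((↑) : F → R)) ?_).fintype_card_le_finrank
  · simpa using this
  rw [Submodule.disjoint_def]
  intro x hx hker
  exact hF x hx fun w hw => congrFun (LinearMap.mem_ker.1 hker) ⟨w, hw⟩

variable [Fintype R] [DecidableEq K]

theorem LinearIndependent.fintype_card_le_card_support (hv : LinearIndependent K v) :
    Fintype.card ι ≤ #{w | ∃ i, v i w ≠ 0} := by
  refine hv.fintype_card_le_card_of_forall_mem_span _ fun x hx hT => funext fun w => ?_
  by_cases hw : ∃ i, v i w ≠ 0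
  · exact hT w (by simpa using hw)
  · exact apply_eq_zero_of_mem_span hx (by simpa using hw)

theorem LinearIndependent.fintype_card_lt_card_support [Nonempty ι] (hv : LinearIndependent K v)
    (hsum : ∀ i, ∑ w, v i w = 0) : Fintype.card ι < #{w | ∃ i, v i w ≠ 0} := by
  classical
  set T : Finset R := {w | ∃ i, v i w ≠ 0}
  obtain ⟨t₀, ht₀⟩ : T.Nonempty := by
    obtain ⟨i⟩ := ‹Nonempty ι›
    obtain ⟨w, hw⟩ := Function.ne_iff.1 (hv.ne_zero i)
    exact ⟨w, by simpa [T] using ⟨i, hw⟩⟩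
  have hdim : Fintype.card ι ≤ #(T.erase t₀) := by
    refine hv.fintype_card_le_card_of_forall_mem_span _ fun x hx hT => ?_
    have hoff : ∀ w ≠ t₀, x w = 0 := fun w hw =>
      if hwT : w ∈ T then hT w (mem_erase.2 ⟨hw, hwT⟩)
      else apply_eq_zero_of_mem_span hx (by simpa [T] using hwT)
    have ht₀ : x t₀ = 0 := by
      rw [← sum_eq_single t₀ (fun w _ hw => hoff w hw) (absurd (mem_univ t₀))]
      exact sum_eq_zero_of_mem_span hx hsum
    funext w
    exact if hw : w = t₀ then hw ▸ ht₀ else hoff w hw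
  rw [card_erase_of_mem ht₀] at hdim
  have := card_pos.2 ⟨t₀, ht₀⟩
  omega

end SpanOfColumns

theorem two_mul_card_le_sum_card_support {ι R K : Type*} [Fintype ι] [Fintype R] [Zero K]
    [DecidableEq K] (v : ι → R → K) (h : ∀ w, #{i | v i w ≠ 0} ≠ 1) :
    2 * #{w | ∃ i, v i w ≠ 0} ≤ ∑ i, #{w | v i w ≠ 0} := by
  set T : Finset R := {w | ∃ i, v i w ≠ 0}
  let r : R → ι → Prop := fun w i => v i w ≠ 0
  have hmult : ∀ w ∈ T, 2 ≤ #(univ.bipartiteAbove r w) := by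
    intro w hw
    obtain ⟨i, hi⟩ : ∃ i, v i w ≠ 0 := by simpa [T] using hw
    have : 0 < #{i | v i w ≠ 0} := card_pos.2 ⟨i, by simpa using hi⟩
    have := h w
    simp only [bipartiteAbove, r]
    omega
  calc 2 * #T = ∑ w ∈ T, 2 := by rw [sum_const, smul_eq_mul, mul_comm]
    _ ≤ ∑ w ∈ T, #(univ.bipartiteAbove r w) := sum_le_sum hmult
    _ = ∑ i, #(T.bipartiteBelow r i) := sum_card_bipartiteAbove_eq_sum_card_bipartiteBelow r
    _ ≤ ∑ i, #{w | v i w ≠ 0} :=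
      sum_le_sum fun i _ => card_le_card (filter_subset_filter _ T.subset_univ)

theorem LinearIndependent.exists_existsUnique_ne_zero {ι R K : Type*} [Fintype ι] [Nonempty ι]
    [Fintype R] [DecidableEq R] [Field K] {v : ι → R → K} (hv : LinearIndependent K v)
    (hinc : ∀ i, IsIncidenceColumn (v i)) : ∃ w, ∃! i, v i w ≠ 0 := by
  classical
  by_contra! hcon
  have hcount := two_mul_card_le_sum_card_support v fun w =>
    (Fintype.existsUnique_iff_card_one _).not.1 (hcon w)
  have hpos := Fintype.card_pos (α := ι)
  by_cases hsingle : ∃ i, #{w | v i w ≠ 0} ≤ 1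
  · obtain ⟨i₀, hi₀⟩ := hsingle
    have hsum : ∑ i, #{w | v i w ≠ 0} ≤ 1 + 2 * (Fintype.card ι - 1) := by
      rw [← add_sum_erase _ _ (mem_univ i₀)]
      refine add_le_add hi₀ ((sum_le_sum fun i _ => (hinc i).card_support_le_two).trans ?_)
      simp [card_erase_of_mem, mul_comm]
    have := hv.fintype_card_le_card_support
    omega
  · push Not at hsingle
    have hsum : ∑ i, #{w | v i w ≠ 0} ≤ 2 * Fintype.card ι := by
      simpa [mul_comm] using sum_le_sum fun i (_ : i ∈ univ) => (hinc i).card_support_le_two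
    have := hv.fintype_card_lt_card_support fun i =>
      ((hinc i).card_support_le_one_or_sum_eq_zero).resolve_left (hsingle i).not_ge
    omega

section ExtremePoints

variable {𝕜 R C : Type*} [Field 𝕜] [LinearOrder 𝕜] [IsStrictOrderedRing 𝕜] [Fintype C]

theorem exists_pos_forall_mul_abs_le {y g : C → 𝕜} (hy : ∀ c, 0 ≤ y c) (hg : ∀ c, y c = 0 → g c = 0) :
    ∃ ε > 0, ∀ c, ε * |g c| ≤ y c := by
  classical
  rcases ({c | g c ≠ 0} : Finset C).eq_empty_or_nonempty with h | hne
  · refine ⟨1, one_pos, fun c => ?_⟩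
    have : g c = 0 := by simpa using filter_eq_empty_iff.1 h (mem_univ c)
    simpa [this] using hy c
  obtain ⟨c₀, hc₀, hmin⟩ := exists_min_image _ (fun c => y c / |g c|) hne
  have hgc₀ : g c₀ ≠ 0 := by simpa using hc₀
  refine ⟨y c₀ / |g c₀|, div_pos ((hy c₀).lt_of_ne' (mt (hg c₀) hgc₀)) (abs_pos.2 hgc₀),
    fun c => ?_⟩
  by_cases hgc : g c = 0
  · simpa [hgc] using hy c
  · exact (le_div_iff₀ (abs_pos.2 hgc)).1 (hmin c (by simpa using hgc))

variable {M : Matrix R C 𝕜} {b : R → 𝕜} {y : C → 𝕜}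

theorem eq_zero_of_mem_extremePoints_of_mulVec_eq_zero
    (hy : y ∈ Set.extremePoints 𝕜 {y : C → 𝕜 | (∀ c, 0 ≤ y c) ∧ M *ᵥ y = b})
    {g : C → 𝕜} (hMg : M *ᵥ g = 0) (hg : ∀ c, y c = 0 → g c = 0) : g = 0 := by
  obtain ⟨⟨hpos, hMy⟩, hext⟩ := hy
  obtain ⟨ε, hε, hεg⟩ := exists_pos_forall_mul_abs_le hpos hg
  have hmem : ∀ s : 𝕜, |s| = ε → y + s • g ∈ {y : C → 𝕜 | (∀ c, 0 ≤ y c) ∧ M *ᵥ y = b} := by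
    intro s hs
    refine ⟨fun c => ?_, by simp [Matrix.mulVec_add, Matrix.mulVec_smul, hMy, hMg]⟩
    have := neg_abs_le (s * g c)
    rw [abs_mul, hs] at this
    simp only [Pi.add_apply, Pi.smul_apply, smul_eq_mul]
    linarith [hεg c]
  have := invertibleOfNonzero (two_ne_zero' 𝕜)
  have hseg := hext (hmem ε (abs_of_pos hε)) (hmem (-ε) (by simp [abs_of_pos hε]))
  rw [neg_smul, ← sub_eq_add_neg] at hseg
  have := hseg (mem_openSegment_add_sub _ _)
  simpa [hε.ne'] using this

theorem linearIndepOn_col_support_of_mem_extremePoints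
    (hy : y ∈ Set.extremePoints 𝕜 {y : C → 𝕜 | (∀ c, 0 ≤ y c) ∧ M *ᵥ y = b}) :
    LinearIndepOn 𝕜 M.col (Function.support y) := by
  rw [linearIndepOn_iff]
  intro l hl hl0
  refine DFunLike.coe_injective (eq_zero_of_mem_extremePoints_of_mulVec_eq_zero hy ?_ ?_)
  · rw [← hl0]
    ext w
    simp [Matrix.mulVec, dotProduct, Finsupp.linearCombination_apply, Finsupp.sum_fintype, mul_comm]
  · intro c hc
    exact (Finsupp.mem_supported' _ _).1 hl c (by simpa using hc)

end ExtremePoints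

theorem apply_mem_bot_of_mulVec_mem_bot {R C K : Type*} [Fintype R] [DecidableEq R] [Fintype C]
    [Field K] {M : Matrix R C K} (hM : ∀ c, IsIncidenceColumn (M.col c))
    {y : C → K} (hind : LinearIndepOn K M.col (support y))
    (hint : ∀ w, (M *ᵥ y) w ∈ (⊥ : Subring K)) (c : C) : y c ∈ (⊥ : Subring K) := by
  classical
  induction hs : support y using WellFoundedLT.induction generalizing y with
  | ind s ih =>
  subst hs
  rcases eq_or_ne y 0 with rfl | hy0
  · exact zero_mem _
  have : Nonempty (support y) := (Function.support_nonempty_iff.2 hy0).to_subtype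
  obtain ⟨w, ⟨c₀, hc₀⟩, hc₀w, huniq⟩ := hind.exists_existsUnique_ne_zero fun c => hM c
  have hrow : (M *ᵥ y) w = M w c₀ * y c₀ := by
    refine sum_eq_single c₀ (fun c _ hc => ?_) (absurd (mem_univ c₀))
    by_cases hyc : y c = 0
    · simp [hyc]
    have : M w c = 0 := by
      by_contra h
      exact hc (congrArg Subtype.val (huniq ⟨c, hyc⟩ h))
    simp [this]
  have hyc₀ : y c₀ ∈ (⊥ : Subring K) := by
    have hsq : M w c₀ * M w c₀ = 1 := (hM c₀).mul_self_apply_of_ne_zero hc₀w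
    rw [← one_mul (y c₀), ← hsq, mul_assoc, ← hrow]
    exact mul_mem ((hM c₀).apply_mem_bot w) (hint w)
  set y' := y - Pi.single c₀ (y c₀)
  have hsub : support y' ⊂ support y := by
    refine Set.ssubset_iff_of_subset (fun c hc => ?_) |>.2 ⟨c₀, hc₀, by simp [y']⟩
    rcases eq_or_ne c c₀ with rfl | hne
    · simp [y'] at hc
    · simpa [y', hne] using hc
  have hy'c := ih _ hsub (hind.mono hsub.subset) (fun w' => ?_) rfl
  · rw [show y c = y' c + (Pi.single c₀ (y c₀) : C → K) c by simp [y']]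
    refine add_mem hy'c ?_
    rcases eq_or_ne c c₀ with rfl | hne
    · simpa using hyc₀
    · simp [hne]
  · rw [Matrix.mulVec_sub, Pi.sub_apply, Matrix.mulVec_single]
    exact sub_mem (hint w') (mul_mem ((hM c₀).apply_mem_bot w') hyc₀)

theorem isIncidenceColumn_theta {m n : ℕ} {β : Fin m → ℕ} {A : Matrix (Fin m) (Fin n) ℕ}
    (hA : ∀ k j, A j k ≤ β j) (c : ColIdx m n β A) : IsIncidenceColumn ((theta m n β A).col c) := by
  have hu : ∀ j, (c.2 j : ℕ) < β j + 1 := fun j => by have := (c.2 j).isLt; omega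
  have hw : ∀ j, (c.2 j : ℕ) + A j c.1 < β j + 1 := fun j => by
    have := (c.2 j).isLt
    have := hA c.1 j
    omega
  refine ⟨fun j => ⟨c.2 j, hu j⟩, fun j => ⟨c.2 j + A j c.1, hw j⟩, ?_⟩
  ext w
  simp [theta, funext_iff, Fin.ext_iff]

theorem bvec_mem_bot (m : ℕ) (β b : Fin m → ℕ) (w : RowIdx m β) :
    bvec m β b w ∈ (⊥ : Subring ℝ) := by
  unfold bvec
  exact sub_mem (by split_ifs <;> simp) (by split_ifs <;> simp)

theorem stmt_11_general (m n : ℕ)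
    (A : Matrix (Fin m) (Fin n) ℕ) (β b : Fin m → ℕ)
    (hA : ∀ k j, A j k ≤ β j) :
    ∀ y ∈ Set.extremePoints ℝ
      {y : ColIdx m n β A → ℝ | (∀ c, 0 ≤ y c) ∧ (theta m n β A).mulVec y = bvec m β b},
      ∀ c, ∃ N : ℕ, y c = (N : ℝ) := by
  intro y hy c
  have hyc : y c ∈ (⊥ : Subring ℝ) :=
    apply_mem_bot_of_mulVec_mem_bot (isIncidenceColumn_theta hA)
      (linearIndepOn_col_support_of_mem_extremePoints hy)
      (fun w => hy.1.2 ▸ bvec_mem_bot m β b w) c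
  obtain ⟨z, hz⟩ := Subring.mem_bot.1 hyc
  lift z to ℕ using by exact_mod_cast hz ▸ hy.1.1 c
  exact ⟨z, hz.symm⟩

/-- Every extreme point of `𝒫 = {𝐲 ≥ 0 : Θ𝐲 = 𝐛}` is a nonnegative integer vector. -/
theorem stmt_11 (m n : ℕ) (hm : 0 < m) (hn : 0 < n)
    (A : Matrix (Fin m) (Fin n) ℕ) (β b : Fin m → ℕ)
    (hb : ∀ j, b j ≤ β j) (hA : ∀ k j, A j k ≤ β j) :
    ∀ y ∈ Set.extremePoints ℝ
      {y : ColIdx m n β A → ℝ | (∀ c, 0 ≤ y c) ∧ (theta m n β A).mulVec y = bvec m β b},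
      ∀ c, ∃ N : ℕ, y c = (N : ℝ) :=
  stmt_11_general m n A β b hA
end

section
/- Let β, b ∈ ℕ^m and A ∈ ℕ^{m×n} with columns A_1,…,A_n satisfy b ≤ β and A_k ≤ β for all k. Let 𝒫 := {𝐲 ∈ ℝ^p : 𝐲 ≥ 0, Θ𝐲 = 𝐛}, let H be the convex hull in ℝ^n of {x ∈ ℕ^n : Ax = b}, and let E be the 0/1 matrix with (E𝐲)_k = Σ_{u ≤ β−A_k} y[k,u]. Then (i) for every extreme point 𝐲 of 𝒫, the vector E𝐲 has nonnegative integer entries, satisfies A(E𝐲) = b, and belongs to H; and (ii) every extreme point of H equals E𝐲 for some extreme point 𝐲 of 𝒫. -/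
/-!
Read `Θ` as the incidence matrix of a network: its nodes are the vectors `w ≤ β`, and `(k, u)` is
an arc from `u` to `u + A_k`, a loop when `A_k = 0`. Then `𝒫` is the set of unit flows from `0`
to `b`, and loops carry no such flow since they only absorb it. The coordinate sum of a node
rises strictly along every other arc, so from `0` one can follow arcs of positive flow until `b`.
An extreme flow equals the unit flow along that path, as it can be pushed slightly away from it
inside `𝒫`; conversely a path flow is extreme, being the only flow supported on its path. A path
from `0` to `b` that uses `x_k` arcs of type `k` exists exactly when `A x = b` and `x_k = 0`
whenever `A_k = 0`, and `E` maps its path flow to `x`. Extreme points of `H` are such `x`: if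
`A_k = 0` then `x ± e_k` also lie in `H`.
-/

open Finset Matrix Filter Topology

lemma eq_of_mem_extremePoints_of_sub_smul_mem {E : Type*} [AddCommGroup E] [Module ℝ E]
    {K : Set E} {x y : E} (hx : x ∈ K.extremePoints ℝ) (hy : y ∈ K) {δ : ℝ} (hδ : 0 < δ)
    (h : x - δ • (y - x) ∈ K) : y = x := by
  refine hx.2 hy h
    ⟨δ / (1 + δ), 1 / (1 + δ), by positivity, by positivity, by field_simp; ring, ?_⟩
  match_scalars <;> field_simp <;> ring

lemma exists_pos_mul_le {ι : Type*} [Finite ι] {p y : ι → ℝ} (hy : ∀ i, 0 ≤ y i)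
    (hp : ∀ i, p i ≠ 0 → 0 < y i) : ∃ δ > 0, ∀ i, δ * p i ≤ y i := by
  have hsmall : ∀ᶠ δ in 𝓝 (0 : ℝ), ∀ i, δ * p i ≤ y i := by
    refine eventually_all.2 fun i => ?_
    by_cases hpi : p i = 0
    · simp [hpi, hy i]
    · have : Tendsto (fun δ : ℝ => δ * p i) (𝓝 0) (𝓝 0) :=
        (continuous_id.mul continuous_const).tendsto' 0 0 (zero_mul _)
      exact this.eventually (eventually_le_nhds (hp i hpi))
  exact (eventually_mem_nhdsWithin.and (eventually_nhdsWithin_of_eventually_nhds hsmall)).exists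
    (f := 𝓝[>] (0 : ℝ))

lemma sum_mul_count_eq_sum_map {ι : Type*} [Fintype ι] [DecidableEq ι] (f : ι → ℕ)
    (ks : List ι) : ∑ i, f i * ks.count i = (ks.map f).sum := by
  induction ks with
  | nil => simp
  | cons k ks ih => simp [List.count_cons, mul_add, Finset.sum_add_distrib, ih, add_comm]

lemma sum_count_sigma {ι : Type*} {σ : ι → Type*} [DecidableEq ι] [∀ i, Fintype (σ i)]
    [∀ i, DecidableEq (σ i)] (l : List (Σ i, σ i)) (i : ι) :
    ∑ u, l.count ⟨i, u⟩ = (l.map Sigma.fst).count i := by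
  induction l with
  | nil => simp
  | cons c l ih =>
    obtain ⟨k, u₀⟩ := c
    by_cases hk : k = i
    · subst hk; simp [List.count_cons, Finset.sum_add_distrib, ih]
    · simp [ih, hk]

lemma exists_list_count_eq {ι : Type*} [Fintype ι] [DecidableEq ι] (x : ι → ℕ) :
    ∃ ks : List ι, ∀ i, ks.count i = x i :=
  ⟨(∑ i, Multiset.replicate (x i) i).toList, fun i => by
    rw [← Multiset.coe_count, Multiset.coe_toList, Multiset.count_sum']
    simp [Multiset.count_replicate]⟩

lemma sum_mul_update_of_eq_zero {ι R : Type*} [Fintype ι] [DecidableEq ι] [Semiring R]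
    {a : ι → R} {k : ι} (hk : a k = 0) (x : ι → R) (t : R) :
    ∑ i, a i * Function.update x k t i = ∑ i, a i * x i := by
  refine Finset.sum_congr rfl fun i _ => ?_
  by_cases h : i = k
  · subst h; simp [hk]
  · simp [h]

lemma apply_eq_zero_of_mem_extremePoints_convexHull {ι : Type*} [DecidableEq ι]
    {S : Set (ι → ℕ)} {k : ι} (hS : ∀ x ∈ S, ∀ t, Function.update x k t ∈ S) {x : ι → ℕ}
    (hx : x ∈ S)
    (hext : (fun i => (x i : ℝ)) ∈ (convexHull ℝ ((fun x i => (x i : ℝ)) '' S)).extremePoints ℝ) :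
    x k = 0 := by
  by_contra hk
  set v : ι → ℝ := fun i => (x i : ℝ)
  have hcast (t : ℕ) : (fun i => ((Function.update x k t i : ℕ) : ℝ)) =
      v + ((t : ℝ) - x k) • Pi.single k 1 := by
    ext i
    by_cases hi : i = k
    · subst hi; simp [v]
    · simp [hi, v]
  have hmem (t : ℕ) : v + ((t : ℝ) - x k) • Pi.single k 1 ∈ convexHull ℝ
      ((fun x i => (x i : ℝ)) '' S) := hcast t ▸ subset_convexHull ℝ _ ⟨_, hS x hx t, rfl⟩
  have hsucc := hmem (x k + 1)
  have hpred := hmem (x k - 1)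
  push_cast [Nat.cast_sub (Nat.one_le_iff_ne_zero.2 hk)] at hsucc hpred
  -- `v` is the midpoint of its two neighbours in direction `k`
  have h := eq_of_mem_extremePoints_of_sub_smul_mem hext hsucc one_pos (by
    convert hpred using 1; module)
  have := congrFun h k
  simp [v] at this

namespace ArcFlow

variable {V C : Type*}

section PathFlow

variable [DecidableEq C]

def pathFlow (l : List C) : C → ℝ := fun c => (l.count c : ℝ)

lemma pathFlow_nil : pathFlow ([] : List C) = 0 := by
  ext c; simp [pathFlow]

lemma pathFlow_cons (c : C) (l : List C) : pathFlow (c :: l) = pathFlow l + Pi.single c 1 := by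
  ext c'
  by_cases h : c' = c
  · subst h; simp [pathFlow]
  · simp [pathFlow, List.count_cons_of_ne (Ne.symm h), h]

lemma pathFlow_nonneg (l : List C) (c : C) : 0 ≤ pathFlow l c := Nat.cast_nonneg _

lemma pathFlow_eq_zero {l : List C} {c : C} (hc : c ∉ l) : pathFlow l c = 0 := by
  simp [pathFlow, List.count_eq_zero_of_not_mem hc]

lemma pathFlow_ne_zero {l : List C} {c : C} (hc : pathFlow l c ≠ 0) : c ∈ l := by
  by_contra h; exact hc (pathFlow_eq_zero h)

end PathFlow

def IsPath (tail head : C → V) : V → V → List C → Prop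
  | s, t, [] => s = t
  | s, t, c :: l => tail c = s ∧ tail c ≠ head c ∧ IsPath tail head (head c) t l

def IsPotential (tail head : C → V) (φ : V → ℕ) : Prop :=
  ∀ c, tail c ≠ head c → φ (tail c) < φ (head c)

def nonnegSolutions [Fintype C] (M : Matrix V C ℝ) (r : V → ℝ) : Set (C → ℝ) :=
  {y | (∀ c, 0 ≤ y c) ∧ M *ᵥ y = r}

variable {tail head : C → V} {φ : V → ℕ}

lemma IsPotential.tail_le_head (hφ : IsPotential tail head φ) (c : C) :
    φ (tail c) ≤ φ (head c) := by
  by_cases h : tail c = head c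
  · rw [h]
  · exact (hφ c h).le

lemma IsPath.potential_le (hφ : IsPotential tail head φ) {s t : V}
    {l : List C} (hp : IsPath tail head s t l) : φ s ≤ φ t := by
  induction l generalizing s with
  | nil => cases hp; rfl
  | cons c l ih => obtain ⟨rfl, hc, hp⟩ := hp; exact (hφ c hc).le.trans (ih hp)

lemma IsPath.potential_le_tail (hφ : IsPotential tail head φ) {s t : V}
    {l : List C} (hp : IsPath tail head s t l) {c : C} (hc : c ∈ l) : φ s ≤ φ (tail c) := by
  induction l generalizing s with
  | nil => simp at hc
  | cons c' l ih =>
    obtain ⟨rfl, hc', hp⟩ := hp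
    rcases List.mem_cons.1 hc with rfl | hc
    · rfl
    · exact (hφ c' hc').le.trans (ih hp hc)

section Incidence

variable [DecidableEq V]

/-- The tail of a loop gets the entry `-1` and nothing else, so loops act as sinks. -/
def incidence (tail head : C → V) : Matrix V C ℝ :=
  Matrix.of fun v c => if v = tail c then -1 else if v = head c then 1 else 0

lemma incidence_col_of_ne {c : C} (hc : tail c ≠ head c) :
    (incidence tail head).col c = Pi.single (head c) 1 - Pi.single (tail c) 1 := by
  ext v
  by_cases h₁ : v = tail c <;> by_cases h₂ : v = head c <;> simp_all [incidence]

lemma incidence_col_of_eq {c : C} (hc : tail c = head c) :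
    (incidence tail head).col c = -Pi.single (tail c) 1 := by
  ext v
  by_cases h₁ : v = tail c <;> simp_all [incidence]

lemma sum_incidence_apply [Fintype V] (c : C) :
    ∑ v, incidence tail head v c = if tail c = head c then -1 else 0 := by
  by_cases hc : tail c = head c
  · have hcol := congrFun (incidence_col_of_eq (tail := tail) hc)
    simp only [col, transpose_apply] at hcol
    simp [hcol, hc]
  · have hcol := congrFun (incidence_col_of_ne (tail := tail) hc)
    simp only [col, transpose_apply] at hcol
    simp [hcol, hc]

variable [Fintype C]

lemma incidence_mulVec_apply (y : C → ℝ) (v : V) :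
    (incidence tail head *ᵥ y) v = ∑ c, incidence tail head v c * y c := rfl

lemma sum_incidence_mulVec [Fintype V] (y : C → ℝ) :
    ∑ v, (incidence tail head *ᵥ y) v = -∑ c with tail c = head c, y c := by
  simp only [incidence_mulVec_apply]
  rw [Finset.sum_comm, Finset.sum_filter, ← Finset.sum_neg_distrib]
  refine Finset.sum_congr rfl fun c _ => ?_
  rw [← Finset.sum_mul, sum_incidence_apply]
  split_ifs <;> simp

lemma eq_zero_of_tail_eq_head [Fintype V] {s t : V} {y : C → ℝ} (hy : ∀ c, 0 ≤ y c)
    (hM : incidence tail head *ᵥ y = Pi.single t 1 - Pi.single s 1) {c : C}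
    (hc : tail c = head c) : y c = 0 := by
  have hsum := sum_incidence_mulVec (tail := tail) (head := head) y
  rw [hM] at hsum
  simp only [Pi.sub_apply, Finset.sum_sub_distrib, Finset.sum_pi_single', Finset.mem_univ,
    if_true, sub_self, zero_eq_neg] at hsum
  exact (Finset.sum_eq_zero_iff_of_nonneg fun c _ => hy c).1 hsum c (by simp [hc])

lemma incidence_mulVec_eq_inflow {y : C → ℝ} {v : V} (hv : ∀ c, tail c = v → y c = 0) :
    (incidence tail head *ᵥ y) v = ∑ c with head c = v, y c := by
  rw [incidence_mulVec_apply, Finset.sum_filter]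
  refine Finset.sum_congr rfl fun c _ => ?_
  by_cases h₁ : tail c = v
  · simp [hv c h₁]
  · by_cases h₂ : head c = v
    · simp [incidence, Ne.symm h₁, h₂]
    · simp [incidence, Ne.symm h₁, Ne.symm h₂, h₂]

lemma exists_tail_eq_of_lt_inflow {y : C → ℝ} {v : V}
    (hv : (incidence tail head *ᵥ y) v < ∑ c with head c = v, y c) :
    ∃ c, tail c = v ∧ y c ≠ 0 := by
  by_contra! h
  exact hv.ne (incidence_mulVec_eq_inflow h)

/-- Following arcs of positive flow: conservation lets us leave every node other than `t` at
which flow enters, and the potential rises along each arc, so the walk ends at `t`. -/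
lemma exists_isPath_of_lt_inflow [Fintype V] (hφ : IsPotential tail head φ) {t : V} {y : C → ℝ}
    (hy : ∀ c, 0 ≤ y c) (hloop : ∀ c, tail c = head c → y c = 0)
    (hM : ∀ v ≠ t, (incidence tail head *ᵥ y) v ≤ 0) (v : V)
    (hv : v = t ∨ (incidence tail head *ᵥ y) v < ∑ c with head c = v, y c) :
    ∃ l, IsPath tail head v t l ∧ ∀ c ∈ l, 0 < y c := by
  induction v using (measure fun v => univ.sup φ - φ v).wf.induction with
  | h v ih =>
    by_cases hvt : v = t
    · exact ⟨[], hvt, by simp⟩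
    obtain ⟨c, rfl, hc⟩ := exists_tail_eq_of_lt_inflow (hv.resolve_left hvt)
    have hpos : 0 < y c := (hy c).lt_of_ne' hc
    have hne : tail c ≠ head c := fun h => hc (hloop c h)
    have hdec : univ.sup φ - φ (head c) < univ.sup φ - φ (tail c) := by
      have := Finset.le_sup (f := φ) (Finset.mem_univ (head c))
      have := hφ c hne
      omega
    obtain ⟨l, hl, hlpos⟩ := ih (head c) hdec <| or_iff_not_imp_left.2 fun ht =>
      calc (incidence tail head *ᵥ y) (head c) ≤ 0 := hM _ ht
        _ < y c := hpos
        _ ≤ ∑ c' with head c' = head c, y c' :=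
          Finset.single_le_sum (fun c' _ => hy c') (by simp)
    exact ⟨c :: l, ⟨rfl, hne, hl⟩, List.forall_mem_cons.2 ⟨hpos, hlpos⟩⟩

lemma exists_isPath_pos [Fintype V] (hφ : IsPotential tail head φ) {s t : V} {y : C → ℝ}
    (hy : ∀ c, 0 ≤ y c) (hM : incidence tail head *ᵥ y = Pi.single t 1 - Pi.single s 1) :
    ∃ l, IsPath tail head s t l ∧ ∀ c ∈ l, 0 < y c := by
  refine exists_isPath_of_lt_inflow hφ hy (fun c => eq_zero_of_tail_eq_head hy hM)
    (fun v hv => ?_) s (or_iff_not_imp_left.2 fun hst => ?_)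
  · rw [hM, Pi.sub_apply, Pi.single_eq_of_ne hv]
    simp only [Pi.single_apply]
    split_ifs <;> norm_num
  · rw [hM, Pi.sub_apply, Pi.single_eq_of_ne hst, Pi.single_eq_same]
    linarith [Finset.sum_nonneg fun c (_ : c ∈ Finset.univ.filter (head · = s)) => hy c]

end Incidence

variable [DecidableEq V] [DecidableEq C] [Fintype C]

lemma IsPath.incidence_mulVec_pathFlow {s t : V} {l : List C} (hp : IsPath tail head s t l) :
    incidence tail head *ᵥ pathFlow l = Pi.single t 1 - Pi.single s 1 := by
  induction l generalizing s with
  | nil => cases hp; simp [pathFlow_nil]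
  | cons c l ih =>
    obtain ⟨rfl, hc, hp⟩ := hp
    rw [pathFlow_cons, mulVec_add, ih hp, mulVec_single_one, incidence_col_of_ne hc]
    abel

lemma IsPath.pathFlow_mem {s t : V} {l : List C} (hp : IsPath tail head s t l) :
    pathFlow l ∈ nonnegSolutions (incidence tail head) (Pi.single t 1 - Pi.single s 1) :=
  ⟨pathFlow_nonneg l, hp.incidence_mulVec_pathFlow⟩

/-- Induction along the path: at its start `s` only the first arc is incident, which forces
the flow on that arc to be `1`. -/
lemma IsPath.eq_pathFlow (hφ : IsPotential tail head φ)
    {s t : V} {l : List C} (hp : IsPath tail head s t l) {z : C → ℝ} (hz : ∀ c ∉ l, z c = 0)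
    (hM : incidence tail head *ᵥ z = Pi.single t 1 - Pi.single s 1) : z = pathFlow l := by
  induction l generalizing s z with
  | nil => ext c; simp [pathFlow, hz c List.not_mem_nil]
  | cons c₀ l ih =>
    obtain ⟨rfl, hc₀, hp⟩ := hp
    have hlt := hφ c₀ hc₀
    have hst : tail c₀ ≠ t := fun h => by subst h; have := hp.potential_le hφ; omega
    have hz₀ : z c₀ = 1 := by
      have hs := congrFun hM (tail c₀)
      rw [incidence_mulVec_apply, Finset.sum_eq_single c₀] at hs
      · simp [incidence, Ne.symm hst] at hs
        linarith
      · intro c _ hc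
        by_cases hcl : c ∈ l
        · have h₁ := hp.potential_le_tail hφ hcl
          have h₂ := hφ.tail_le_head c
          have ht : tail c₀ ≠ tail c := fun h => by rw [← h] at h₁; omega
          have hh : tail c₀ ≠ head c := fun h => by rw [← h] at h₂; omega
          simp [incidence, ht, hh]
        · simp [hz c (by simp [hc, hcl])]
      · simp
    have hz' : z - Pi.single c₀ 1 = pathFlow l := by
      refine ih hp (fun c hc => ?_) ?_
      · by_cases h : c = c₀
        · subst h; simp [hz₀]
        · simp [hz c (by simp [h, hc]), h]
      · rw [mulVec_sub, hM, mulVec_single_one, incidence_col_of_ne hc₀]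
        abel
    rw [pathFlow_cons, ← hz', sub_add_cancel]

theorem IsPath.pathFlow_mem_extremePoints (hφ : IsPotential tail head φ) {s t : V}
    {l : List C} (hp : IsPath tail head s t l) :
    pathFlow l ∈
      (nonnegSolutions (incidence tail head) (Pi.single t 1 - Pi.single s 1)).extremePoints ℝ := by
  refine ⟨hp.pathFlow_mem, fun y₁ hy₁ y₂ hy₂ ⟨a, b, ha, hb, _, hab⟩ => ?_⟩
  refine hp.eq_pathFlow hφ (fun c hc => ?_) hy₁.2
  have h := congrFun hab c
  simp only [pathFlow_eq_zero hc, Pi.add_apply, Pi.smul_apply, smul_eq_mul] at h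
  nlinarith [hy₁.1 c, hy₂.1 c, mul_nonneg hb.le (hy₂.1 c)]

theorem exists_isPath_of_mem_extremePoints [Fintype V] (hφ : IsPotential tail head φ) {s t : V}
    {y : C → ℝ}
    (hy : y ∈
      (nonnegSolutions (incidence tail head) (Pi.single t 1 - Pi.single s 1)).extremePoints ℝ) :
    ∃ l, IsPath tail head s t l ∧ y = pathFlow l := by
  obtain ⟨hy₀, hM⟩ := hy.1
  obtain ⟨l, hp, hpos⟩ := exists_isPath_pos hφ hy₀ hM
  obtain ⟨δ, hδ, hle⟩ := exists_pos_mul_le hy₀ fun c hc => hpos c (pathFlow_ne_zero hc)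
  refine ⟨l, hp,
    (eq_of_mem_extremePoints_of_sub_smul_mem hy hp.pathFlow_mem hδ ⟨fun c => ?_, ?_⟩).symm⟩
  · simp only [Pi.sub_apply, Pi.smul_apply, smul_eq_mul]
    nlinarith [hle c, hy₀ c]
  · rw [mulVec_sub, mulVec_smul, mulVec_sub, hM, hp.incidence_mulVec_pathFlow, sub_self,
      smul_zero, sub_zero]

end ArcFlow

namespace StateNetwork

variable {m n : ℕ} {A : Matrix (Fin m) (Fin n) ℕ} {β : Fin m → ℕ}

def node (w : Fin m → ℕ) (hw : ∀ j, w j ≤ β j) : RowIdx m β :=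
  fun j => ⟨w j, Nat.lt_succ_of_le (hw j)⟩

lemma val_eq_iff_eq_node {v : RowIdx m β} {w : Fin m → ℕ} (hw : ∀ j, w j ≤ β j) :
    (fun j => (v j : ℕ)) = w ↔ v = node w hw :=
  ⟨fun h => funext fun j => Fin.ext (congrFun h j), fun h => h ▸ rfl⟩

def origin : RowIdx m β := node (fun _ => 0) fun j => Nat.zero_le (β j)

def arcTail (c : ColIdx m n β A) : RowIdx m β :=
  node (fun j => c.2 j) fun j => by have := (c.2 j).isLt; omega

def arcHead (hA : ∀ k j, A j k ≤ β j) (c : ColIdx m n β A) : RowIdx m β :=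
  node (fun j => c.2 j + A j c.1) fun j => by have := (c.2 j).isLt; have := hA c.1 j; omega

def level (w : RowIdx m β) : ℕ := ∑ j, (w j : ℕ)

lemma isPotential_level (hA : ∀ k j, A j k ≤ β j) :
    ArcFlow.IsPotential arcTail (arcHead hA) (level (β := β)) := by
  intro c hc
  have hle (j : Fin m) : (arcTail c j : ℕ) ≤ arcHead hA c j := Nat.le_add_right _ _
  obtain ⟨j, hj⟩ : ∃ j, arcTail c j ≠ arcHead hA c j := by
    by_contra! h
    exact hc (funext h)
  exact Finset.sum_lt_sum (fun j _ => hle j)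
    ⟨j, Finset.mem_univ j, (hle j).lt_of_ne (Fin.val_ne_of_ne hj)⟩

lemma theta_eq_incidence (hA : ∀ k j, A j k ≤ β j) :
    theta m n β A = ArcFlow.incidence arcTail (arcHead hA) := by
  ext w c
  exact if_congr (val_eq_iff_eq_node _) rfl (if_congr (val_eq_iff_eq_node _) rfl rfl)

lemma bvec_eq {b : Fin m → ℕ} (hb : ∀ j, b j ≤ β j) :
    bvec m β b = Pi.single (node b hb) 1 - Pi.single origin 1 := by
  ext w
  simp only [Pi.sub_apply, Pi.single_apply]
  exact congrArg₂ _ (if_congr (val_eq_iff_eq_node hb) rfl rfl)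
    (if_congr (val_eq_iff_eq_node _) rfl rfl)

lemma val_eq_of_isPath {hA : ∀ k j, A j k ≤ β j} {s t : RowIdx m β} {l : List (ColIdx m n β A)}
    (hp : ArcFlow.IsPath arcTail (arcHead hA) s t l) (j : Fin m) :
    (t j : ℕ) = s j + ∑ k, A j k * (l.map Sigma.fst).count k := by
  induction l generalizing s with
  | nil => cases hp; simp
  | cons c l ih =>
    obtain ⟨rfl, -, hp⟩ := hp
    rw [ih hp, sum_mul_count_eq_sum_map, sum_mul_count_eq_sum_map]
    simp only [arcHead, arcTail, node, List.map_cons, List.sum_cons]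
    ring

lemma sum_mul_count_eq_of_isPath {hA : ∀ k j, A j k ≤ β j} {b : Fin m → ℕ}
    {hb : ∀ j, b j ≤ β j} {l : List (ColIdx m n β A)}
    (hp : ArcFlow.IsPath arcTail (arcHead hA) origin (node b hb) l) (j : Fin m) :
    ∑ k, A j k * (l.map Sigma.fst).count k = b j := by
  simpa [origin, node] using (val_eq_of_isPath hp j).symm

lemma exists_isPath_map_fst (hA : ∀ k j, A j k ≤ β j) (ks : List (Fin n))
    (hks : ∀ k ∈ ks, ∃ j, A j k ≠ 0) (s : RowIdx m β) (hs : ∀ j, (s j : ℕ) + (ks.map (A j)).sum ≤ β j) :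
    ∃ t l, ArcFlow.IsPath arcTail (arcHead hA) s t l ∧ l.map Sigma.fst = ks := by
  induction ks generalizing s with
  | nil => exact ⟨s, [], rfl, rfl⟩
  | cons k ks ih =>
    simp only [List.map_cons, List.sum_cons] at hs
    let c : ColIdx m n β A := ⟨k, fun j => ⟨s j, by have := hs j; omega⟩⟩
    have htail : arcTail c = s := rfl
    have hloop : arcTail c ≠ arcHead hA c := by
      obtain ⟨j, hj⟩ := hks k List.mem_cons_self
      intro h
      have := congrArg Fin.val (congrFun h j)
      simp only [arcTail, arcHead, node, c] at this
      omega
    obtain ⟨t, l, hp, hl⟩ := ih (fun k hk => hks k (List.mem_cons_of_mem _ hk)) (arcHead hA c)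
      fun j => by simp only [arcHead, node, c]; linarith [hs j]
    exact ⟨t, c :: l, ⟨htail, hloop, hp⟩, by simp [hl, c]⟩

lemma exists_isPath_of_solution (hA : ∀ k j, A j k ≤ β j) {b : Fin m → ℕ} (hb : ∀ j, b j ≤ β j)
    {x : Fin n → ℕ} (hx : ∀ j, ∑ k, A j k * x k = b j) (hx₀ : ∀ k, x k ≠ 0 → ∃ j, A j k ≠ 0) :
    ∃ l, ArcFlow.IsPath arcTail (arcHead hA) origin (node b hb) l ∧
      ∀ k, (l.map Sigma.fst).count k = x k := by
  obtain ⟨ks, hks⟩ := exists_list_count_eq x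
  have hsum (j : Fin m) : (ks.map (A j)).sum = b j := by
    rw [← sum_mul_count_eq_sum_map, ← hx j]
    simp only [hks]
  obtain ⟨t, l, hp, hl⟩ := exists_isPath_map_fst hA ks
    (fun k hk => hx₀ k (by rw [← hks]; exact (List.count_pos_iff.2 hk).ne')) origin
    fun j => by simp [origin, node, hsum, hb j]
  have ht : t = node b hb := by
    ext j
    rw [val_eq_of_isPath hp, hl]
    simp [origin, node, hks, hx]
  exact ⟨l, ht ▸ hp, by simp [hl, hks]⟩

lemma sum_pathFlow_eq_count (l : List (ColIdx m n β A)) (k : Fin n) :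
    ∑ u : ∀ j : Fin m, Fin (β j - A j k + 1), ArcFlow.pathFlow l ⟨k, u⟩ =
      ((l.map Sigma.fst).count k : ℝ) := by
  simp only [ArcFlow.pathFlow]
  exact_mod_cast sum_count_sigma l k

end StateNetwork

theorem stmt_12_general (m n : ℕ)
    (A : Matrix (Fin m) (Fin n) ℕ) (β b : Fin m → ℕ)
    (hb : ∀ j, b j ≤ β j) (hA : ∀ k j, A j k ≤ β j) :
    (∀ y ∈ Set.extremePoints ℝ
        {y : ColIdx m n β A → ℝ | (∀ c, 0 ≤ y c) ∧ (theta m n β A).mulVec y = bvec m β b},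
      (∀ k : Fin n, ∃ N : ℕ,
        (∑ u : ∀ j' : Fin m, Fin (β j' - A j' k + 1), y ⟨k, u⟩) = (N : ℝ)) ∧
      (∀ j, ∑ k, (A j k : ℝ) * (∑ u : ∀ j' : Fin m, Fin (β j' - A j' k + 1), y ⟨k, u⟩)
          = (b j : ℝ)) ∧
      ((fun k => ∑ u : ∀ j' : Fin m, Fin (β j' - A j' k + 1), y ⟨k, u⟩) ∈
        convexHull ℝ ((fun x : Fin n → ℕ => fun k => (x k : ℝ)) ''
          {x : Fin n → ℕ | ∀ j, ∑ k, A j k * x k = b j}))) ∧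
    (∀ v ∈ Set.extremePoints ℝ
        (convexHull ℝ ((fun x : Fin n → ℕ => fun k => (x k : ℝ)) ''
          {x : Fin n → ℕ | ∀ j, ∑ k, A j k * x k = b j})),
      ∃ y ∈ Set.extremePoints ℝ
        {y : ColIdx m n β A → ℝ | (∀ c, 0 ≤ y c) ∧ (theta m n β A).mulVec y = bvec m β b},
        v = fun k => ∑ u : ∀ j' : Fin m, Fin (β j' - A j' k + 1), y ⟨k, u⟩) := by
  rw [StateNetwork.theta_eq_incidence hA, StateNetwork.bvec_eq hb]
  have hφ := StateNetwork.isPotential_level hA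
  refine ⟨fun y hy => ?_, fun v hv => ?_⟩
  · obtain ⟨l, hp, rfl⟩ := ArcFlow.exists_isPath_of_mem_extremePoints hφ hy
    have hsol := StateNetwork.sum_mul_count_eq_of_isPath hp
    simp only [StateNetwork.sum_pathFlow_eq_count]
    exact ⟨fun k => ⟨_, rfl⟩, fun j => by exact_mod_cast hsol j,
      subset_convexHull ℝ _ ⟨_, hsol, rfl⟩⟩
  · obtain ⟨x, hx, rfl⟩ := extremePoints_convexHull_subset hv
    have hx₀ (k : Fin n) (hk : x k ≠ 0) : ∃ j, A j k ≠ 0 := by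
      by_contra! hA₀
      refine hk (apply_eq_zero_of_mem_extremePoints_convexHull (fun x hx t j => ?_) hx hv)
      exact (sum_mul_update_of_eq_zero (hA₀ j) x t).trans (hx j)
    obtain ⟨l, hp, hcount⟩ := StateNetwork.exists_isPath_of_solution hA hb hx hx₀
    refine ⟨_, hp.pathFlow_mem_extremePoints hφ, ?_⟩
    ext k
    simp [StateNetwork.sum_pathFlow_eq_count, hcount]

/-- (i) For every extreme point `𝐲` of `𝒫`, the vector `E𝐲` is a nonnegative
integer vector with `A(E𝐲) = b` lying in the integer hull `H`; (ii) every
extreme point of `H` is `E𝐲` for some extreme point `𝐲` of `𝒫`. -/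
theorem stmt_12 (m n : ℕ) (hm : 0 < m) (hn : 0 < n)
    (A : Matrix (Fin m) (Fin n) ℕ) (β b : Fin m → ℕ)
    (hb : ∀ j, b j ≤ β j) (hA : ∀ k j, A j k ≤ β j) :
    (∀ y ∈ Set.extremePoints ℝ
        {y : ColIdx m n β A → ℝ | (∀ c, 0 ≤ y c) ∧ (theta m n β A).mulVec y = bvec m β b},
      (∀ k : Fin n, ∃ N : ℕ,
        (∑ u : ∀ j' : Fin m, Fin (β j' - A j' k + 1), y ⟨k, u⟩) = (N : ℝ)) ∧
      (∀ j, ∑ k, (A j k : ℝ) * (∑ u : ∀ j' : Fin m, Fin (β j' - A j' k + 1), y ⟨k, u⟩)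
          = (b j : ℝ)) ∧
      ((fun k => ∑ u : ∀ j' : Fin m, Fin (β j' - A j' k + 1), y ⟨k, u⟩) ∈
        convexHull ℝ ((fun x : Fin n → ℕ => fun k => (x k : ℝ)) ''
          {x : Fin n → ℕ | ∀ j, ∑ k, A j k * x k = b j}))) ∧
    (∀ v ∈ Set.extremePoints ℝ
        (convexHull ℝ ((fun x : Fin n → ℕ => fun k => (x k : ℝ)) ''
          {x : Fin n → ℕ | ∀ j, ∑ k, A j k * x k = b j})),
      ∃ y ∈ Set.extremePoints ℝ
        {y : ColIdx m n β A → ℝ | (∀ c, 0 ≤ y c) ∧ (theta m n β A).mulVec y = bvec m β b},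
        v = fun k => ∑ u : ∀ j' : Fin m, Fin (β j' - A j' k + 1), y ⟨k, u⟩) :=
  stmt_12_general m n A β b hb hA
end

section
/- Let β, b ∈ ℕ^m and A ∈ ℕ^{m×n} with columns A_1,…,A_n satisfy b ≤ β, A_k ≤ β and A_k ≠ 0 for all 1 ≤ k ≤ n; assume there exists x ∈ ℕ^n with Ax = b, and let c ∈ ℝ^n. For 1 ≤ ℓ ≤ |β| := Σ_j β_j define J_ℓ := inf { c'(E𝐲) : 𝐲 ∈ ℝ^p, 𝐲 ≥ 0, and for every z ∈ ℕ^m with z ≤ β and 1 ≤ |z| ≤ ℓ, b^z = Σ_{k,u} y[k,u]·((u+A_k)^z − u^z) }, and define J_• := min { c'x : x ∈ ℕ^n, Ax = b }. Then J_1 ≤ J_2 ≤ … ≤ J_{|β|} and J_{|β|} = J_•. -/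
/-!
An integer solution `x` of `A x = b` yields an LP solution of the same cost: walk from `0` to `b`
in steps `A_k`, using column `k` exactly `x k` times, and put weight one on every arc `(k, u)`
of the walk; every moment constraint then telescopes. Conversely, at level `|β|` the constraints
cover every monomial `v ↦ v^z` with `z ≤ β`, and these span all functions on the box `[0, β]`
(Vandermonde in each coordinate), so `∑ y[k,u] (G (u + A_k) - G u) = G b - G 0` for every `G`.
Taking for `G` the optimal cost-to-go `V v = min {c'x : v + A x = b}`, which satisfies
`V u ≤ c_k + V (u + A_k)`, gives `J_• = V 0 ≤ V b + c'E y ≤ c'E y`. Monotonicity in `ℓ` is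
inclusion of the feasible sets; the degree-one constraints force `∑ y ≤ |b|`, which bounds
each relaxation from below.
-/

namespace IntegerProgram

open Finset Matrix

variable {m n : ℕ}

def monomial (z v : Fin m → ℕ) : ℝ := ∏ j, (v j : ℝ) ^ z j

lemma monomial_zero_left (v : Fin m → ℕ) : monomial 0 v = 1 := by simp [monomial]

lemma monomial_zero_right {z : Fin m → ℕ} (hz : z ≠ 0) : monomial z 0 = 0 := by
  obtain ⟨j, hj⟩ := Function.ne_iff.1 hz
  exact prod_eq_zero (mem_univ j) (by simpa using zero_pow (M₀ := ℝ) hj)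

lemma monomial_single_one (j : Fin m) (v : Fin m → ℕ) : monomial (Pi.single j 1) v = v j := by
  rw [monomial, prod_eq_single j (fun j' _ hj' => by simp [hj']) (by simp)]
  simp

lemma exists_pow_expansion (B : ℕ) (f : ℕ → ℝ) :
    ∃ a : Fin (B + 1) → ℝ, ∀ t ≤ B, f t = ∑ s : Fin (B + 1), a s * (t : ℝ) ^ (s : ℕ) := by
  set M := vandermonde fun i : Fin (B + 1) => ((i : ℕ) : ℝ)
  have hM : IsUnit M.det := isUnit_iff_ne_zero.2 <| det_vandermonde_ne_zero_iff.2
    fun i i' h => Fin.ext (by exact_mod_cast h)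
  refine ⟨M⁻¹ *ᵥ fun i : Fin (B + 1) => f i, fun t ht => ?_⟩
  have hsolve : M *ᵥ (M⁻¹ *ᵥ fun i : Fin (B + 1) => f i) = fun i : Fin (B + 1) => f i := by
    rw [mulVec_mulVec, mul_nonsing_inv _ hM, one_mulVec]
  simpa [M, mulVec, dotProduct, mul_comm, Nat.mod_eq_of_lt (Nat.lt_succ_of_le ht)]
    using (congrFun hsolve ⟨t, Nat.lt_succ_of_le ht⟩).symm

lemma exists_monomial_expansion (β : Fin m → ℕ) (G : (Fin m → ℕ) → ℝ) :
    ∃ Co : (∀ j, Fin (β j + 1)) → ℝ, ∀ v ≤ β, G v = ∑ z, Co z * monomial (fun j => z j) v := by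
  classical
  choose a ha using fun j (w : Fin (β j + 1)) =>
    exists_pow_expansion (β j) fun t => if t = w then 1 else 0
  refine ⟨fun z => ∑ w : ∀ j, Fin (β j + 1), G (fun j => w j) * ∏ j, a j (w j) (z j),
    fun v hv => ?_⟩
  have hind : ∀ w : ∀ j, Fin (β j + 1), (∏ j, if v j = w j then (1 : ℝ) else 0) =
      ∑ z : ∀ j, Fin (β j + 1), (∏ j, a j (w j) (z j)) * monomial (fun j => z j) v := by
    intro w
    simp_rw [fun j => ha j (w j) (v j) (hv j), Fintype.prod_sum, monomial, ← prod_mul_distrib]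
  set v' : ∀ j, Fin (β j + 1) := fun j => ⟨v j, Nat.lt_succ_of_le (hv j)⟩
  calc G v = ∑ w : ∀ j, Fin (β j + 1),
        G (fun j => w j) * ∏ j, if v j = w j then (1 : ℝ) else 0 := by
        rw [Fintype.sum_eq_single v']
        · simp [v']
        · intro w hw
          obtain ⟨j, hj⟩ := Function.ne_iff.1 hw
          rw [prod_eq_zero (mem_univ j) (if_neg fun h => hj (Fin.ext h.symm)), mul_zero]
    _ = _ := by
        simp_rw [hind, mul_sum, sum_mul]
        rw [sum_comm]
        simp_rw [mul_assoc]

section Flow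

variable (A : Matrix (Fin m) (Fin n) ℕ) (β : Fin m → ℕ)

/-- The index set of the LP variables `y[k,u]`: the pair `(k, u)` is read as the arc from `u` to
`u + A_k`, both endpoints lying in the box `[0, β]`. -/
abbrev Arc := Σ k : Fin n, ∀ j, Fin (β j - A j k + 1)

variable {A β}

def Arc.tail (c : Arc A β) : Fin m → ℕ := fun j => c.2 j

def Arc.head (c : Arc A β) : Fin m → ℕ := fun j => c.2 j + A j c.1

lemma Arc.tail_le (c : Arc A β) : c.tail ≤ β := fun j => by
  have := (c.2 j).is_le
  simp only [Arc.tail]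
  omega

lemma Arc.head_le (hA : ∀ k j, A j k ≤ β j) (c : Arc A β) : c.head ≤ β := fun j => by
  have := (c.2 j).is_le
  have := hA c.1 j
  simp only [Arc.head]
  omega

variable (A β)

def netChange (y : Arc A β → ℝ) : ((Fin m → ℕ) → ℝ) →ₗ[ℝ] ℝ where
  toFun G := ∑ c, y c * (G c.head - G c.tail)
  map_add' G G' := by
    simp only [Pi.add_apply, ← sum_add_distrib]
    exact sum_congr rfl fun c _ => by ring
  map_smul' r G := by
    simp only [Pi.smul_apply, smul_eq_mul, RingHom.id_apply, mul_sum]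
    exact sum_congr rfl fun c _ => by ring

lemma netChange_apply (y : Arc A β → ℝ) (G : (Fin m → ℕ) → ℝ) :
    netChange A β y G = ∑ c, y c * (G c.head - G c.tail) := rfl

def IsFlow (y : Arc A β → ℝ) (x : Fin n → ℕ) : Prop :=
  (∀ c, 0 ≤ y c) ∧ (∀ k, ∑ u, y ⟨k, u⟩ = x k) ∧ ∀ G, netChange A β y G = G (A *ᵥ x) - G 0

lemma isFlow_zero : IsFlow A β 0 0 := by
  refine ⟨fun _ => le_rfl, fun _ => by simp, fun G => ?_⟩
  simp [netChange_apply]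

variable {A β}

lemma IsFlow.add_arc [DecidableEq (Arc A β)] {y : Arc A β → ℝ} {x : Fin n → ℕ} (hy : IsFlow A β y x)
    {k : Fin n} {u : ∀ j, Fin (β j - A j k + 1)} (hu : (fun j => (u j : ℕ)) = A *ᵥ x) :
    IsFlow A β (y + Pi.single ⟨k, u⟩ 1) (x + Pi.single k 1) := by
  obtain ⟨hnn, hmarg, hcons⟩ := hy
  refine ⟨fun c => add_nonneg (hnn c) ?_, fun k' => ?_, fun G => ?_⟩
  · by_cases h : c = ⟨k, u⟩ <;> simp [h]
  · by_cases h : k' = k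
    · subst h
      simp [sum_add_distrib, hmarg, Pi.single_apply]
    · simp [hmarg, h]
  · have hhead : Arc.head (⟨k, u⟩ : Arc A β) = A *ᵥ (x + Pi.single k 1) := by
      ext j
      simp [Arc.head, mulVec_add, ← hu]
    have htail : Arc.tail (⟨k, u⟩ : Arc A β) = A *ᵥ x := hu
    calc netChange A β (y + Pi.single ⟨k, u⟩ 1) G
        = netChange A β y G + (G (Arc.head ⟨k, u⟩) - G (Arc.tail ⟨k, u⟩)) := by
          simp [netChange_apply, add_mul, sum_add_distrib, Pi.single_apply]
      _ = _ := by rw [hcons, hhead, htail]; ring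

lemma exists_isFlow (x : Fin n → ℕ) (hx : A *ᵥ x ≤ β) : ∃ y, IsFlow A β y x := by
  classical
  induction hN : ∑ k, x k generalizing x with
  | zero =>
    obtain rfl : x = 0 := funext fun k => (sum_eq_zero_iff.1 hN) k (mem_univ k)
    exact ⟨0, isFlow_zero A β⟩
  | succ N ih =>
    obtain ⟨k, hk⟩ : ∃ k, x k ≠ 0 := by
      by_contra! h
      simp [h] at hN
    obtain ⟨x, rfl⟩ : ∃ x', x = x' + Pi.single k 1 := ⟨x - Pi.single k 1, by
      ext k'
      by_cases h : k' = k
      · subst h; simp; omega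
      · simp [h]⟩
    have hcol : A *ᵥ (x + Pi.single k 1) = A *ᵥ x + fun j => A j k := by
      ext j
      simp [mulVec_add]
    obtain ⟨y, hy⟩ := ih x (fun j => le_trans (by simp [hcol]) (hx j))
      (by simpa [sum_add_distrib] using hN)
    exact ⟨_, hy.add_arc (u := fun j => ⟨(A *ᵥ x) j, by have := hx j; simp [hcol] at this; omega⟩)
      rfl⟩

lemma netChange_eq_sub_of_monomial (hA : ∀ k j, A j k ≤ β j) {y : Arc A β → ℝ}
    {t : Fin m → ℕ} (ht : t ≤ β)
    (hy : ∀ z : ∀ j, Fin (β j + 1), netChange A β y (monomial fun j => z j) =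
      monomial (fun j => z j) t - monomial (fun j => z j) 0)
    (G : (Fin m → ℕ) → ℝ) : netChange A β y G = G t - G 0 := by
  obtain ⟨Co, hCo⟩ := exists_monomial_expansion β G
  set G' : (Fin m → ℕ) → ℝ := ∑ z, Co z • monomial fun j => z j
  have hGG' : ∀ v ≤ β, G v = G' v := fun v hv => by simp [G', hCo v hv]
  have hnet : netChange A β y G = netChange A β y G' := by
    simp only [netChange_apply]
    exact sum_congr rfl fun c _ => by rw [hGG' _ (c.head_le hA), hGG' _ c.tail_le]
  rw [hnet, hGG' t ht, hGG' 0 fun _ => Nat.zero_le _]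
  simp [G', hy, mul_sub, sum_sub_distrib]

end Flow

section CostToGo

variable (A : Matrix (Fin m) (Fin n) ℕ) (b : Fin m → ℕ) (cst : Fin n → ℝ)

lemma le_sum_of_mulVec_le (hAne : ∀ k, ∃ j, A j k ≠ 0) {x : Fin n → ℕ} {w : Fin m → ℕ}
    (h : A *ᵥ x ≤ w) (k : Fin n) : x k ≤ ∑ j, w j := by
  obtain ⟨j, hj⟩ := hAne k
  calc x k ≤ A j k * x k := Nat.le_mul_of_pos_left _ (Nat.pos_of_ne_zero hj)
    _ ≤ (A *ᵥ x) j := single_le_sum (f := fun k => A j k * x k) (by simp) (mem_univ k)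
    _ ≤ w j := h j
    _ ≤ ∑ j, w j := single_le_sum (by simp) (mem_univ j)

lemma abs_sum_mul_le_of_mulVec_le (hAne : ∀ k, ∃ j, A j k ≠ 0) {x : Fin n → ℕ}
    {w : Fin m → ℕ} (h : A *ᵥ x ≤ w) :
    |∑ k, cst k * (x k : ℝ)| ≤ (∑ k, |cst k|) * ∑ j, (w j : ℝ) := by
  calc |∑ k, cst k * (x k : ℝ)| ≤ ∑ k, |cst k| * (x k : ℝ) :=
        (abs_sum_le_sum_abs _ _).trans_eq (by simp [abs_mul])
    _ ≤ ∑ k, |cst k| * ∑ j, (w j : ℝ) := sum_le_sum fun k _ =>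
        mul_le_mul_of_nonneg_left (by exact_mod_cast le_sum_of_mulVec_le A hAne h k) (abs_nonneg _)
    _ = _ := (sum_mul _ _ _).symm

def intCosts : Set ℝ :=
  {r | ∃ x : Fin n → ℕ, (∀ j, ∑ k, A j k * x k = b j) ∧ r = ∑ k, cst k * (x k : ℝ)}

def completionCosts (v : Fin m → ℕ) : Set ℝ :=
  {r | ∃ x : Fin n → ℕ, v + A *ᵥ x = b ∧ r = ∑ k, cst k * (x k : ℝ)}

open Classical in
/-- Where `b` cannot be reached from `v`, the value is a bound chosen large enough, and growing
fast enough in `v`, for `costToGo_le_add` to hold. -/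
noncomputable def costToGo (v : Fin m → ℕ) : ℝ :=
  if (completionCosts A b cst v).Nonempty then sInf (completionCosts A b cst v)
  else (∑ k, |cst k|) * (∑ j, (b j : ℝ) + 1 + ∑ j, (v j : ℝ))

variable {A b cst}

lemma abs_le_of_mem_completionCosts (hAne : ∀ k, ∃ j, A j k ≠ 0) {v : Fin m → ℕ} {r : ℝ}
    (hr : r ∈ completionCosts A b cst v) : |r| ≤ (∑ k, |cst k|) * ∑ j, (b j : ℝ) := by
  obtain ⟨x, hx, rfl⟩ := hr
  exact abs_sum_mul_le_of_mulVec_le A cst hAne (hx ▸ le_add_self)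

lemma bddBelow_completionCosts (hAne : ∀ k, ∃ j, A j k ≠ 0) (v : Fin m → ℕ) :
    BddBelow (completionCosts A b cst v) :=
  ⟨_, fun _ hr => neg_le_of_abs_le (abs_le_of_mem_completionCosts hAne hr)⟩

lemma costToGo_le_add (hAne : ∀ k, ∃ j, A j k ≠ 0) (v : Fin m → ℕ) (k : Fin n) :
    costToGo A b cst v ≤ cst k + costToGo A b cst (v + fun j => A j k) := by
  classical
  have hlift : ∀ r ∈ completionCosts A b cst (v + fun j => A j k),
      cst k + r ∈ completionCosts A b cst v := by
    rintro _ ⟨x, hx, rfl⟩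
    refine ⟨x + Pi.single k 1, ?_, ?_⟩
    · rw [← hx]
      ext j
      simp [mulVec_add]
      ring
    · simp [mul_add, sum_add_distrib, Pi.single_apply, add_comm]
  set S := ∑ k, |cst k|
  have hcst : -S ≤ cst k :=
    neg_le_of_abs_le (single_le_sum (f := fun k => |cst k|) (by simp) (mem_univ k))
  by_cases hw : (completionCosts A b cst (v + fun j => A j k)).Nonempty
  · have hv : (completionCosts A b cst v).Nonempty := ⟨_, hlift _ hw.some_mem⟩
    rw [costToGo, costToGo, if_pos hv, if_pos hw, ← sub_le_iff_le_add']
    exact le_csInf hw fun r hr => sub_le_iff_le_add'.2 <|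
      csInf_le (bddBelow_completionCosts hAne v) (hlift r hr)
  have hS : 0 ≤ S := sum_nonneg fun _ _ => abs_nonneg _
  have hcol : (1 : ℝ) ≤ ∑ j, (A j k : ℝ) := by
    obtain ⟨j, hj⟩ := hAne k
    exact le_trans (by exact_mod_cast Nat.one_le_iff_ne_zero.2 hj)
      (single_le_sum (f := fun j => (A j k : ℝ)) (by simp) (mem_univ j))
  have hsum : ∑ j, ((v + fun j => A j k) j : ℝ) = ∑ j, (v j : ℝ) + ∑ j, (A j k : ℝ) := by
    simp [sum_add_distrib]
  have hvnn : 0 ≤ ∑ j, (v j : ℝ) := sum_nonneg fun _ _ => Nat.cast_nonneg _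
  rw [costToGo, costToGo, if_neg hw, hsum]
  split_ifs with hv
  · have hle : sInf (completionCosts A b cst v) ≤ S * ∑ j, (b j : ℝ) :=
      (csInf_le (bddBelow_completionCosts hAne v) hv.some_mem).trans
        ((le_abs_self _).trans (abs_le_of_mem_completionCosts hAne hv.some_mem))
    nlinarith
  · nlinarith

lemma costToGo_self_nonpos (hAne : ∀ k, ∃ j, A j k ≠ 0) : costToGo A b cst b ≤ 0 := by
  have h0 : (0 : ℝ) ∈ completionCosts A b cst b := ⟨0, by simp, by simp⟩
  rw [costToGo, if_pos ⟨0, h0⟩]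
  exact csInf_le (bddBelow_completionCosts hAne b) h0

lemma costToGo_zero (hfeas : (intCosts A b cst).Nonempty) :
    costToGo A b cst 0 = sInf (intCosts A b cst) := by
  have hcompl : completionCosts A b cst 0 = intCosts A b cst := by
    ext r
    simp [completionCosts, intCosts, funext_iff, mulVec, dotProduct]
  rw [costToGo, hcompl, if_pos hfeas]

end CostToGo

section Relaxation

variable (A : Matrix (Fin m) (Fin n) ℕ) (β b : Fin m → ℕ) (cst : Fin n → ℝ)

def lpCosts (ℓ : ℕ) : Set ℝ :=
  {r | ∃ y : Arc A β → ℝ, (∀ c, 0 ≤ y c) ∧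
    (∀ z : ∀ j, Fin (β j + 1), 1 ≤ ∑ j, (z j : ℕ) → ∑ j, (z j : ℕ) ≤ ℓ →
      monomial (fun j => z j) b = netChange A β y (monomial fun j => z j)) ∧
    r = ∑ k, cst k * ∑ u, y ⟨k, u⟩}

variable {A β b cst}

lemma sum_mul_sum_eq_sum_arc (y : Arc A β → ℝ) :
    ∑ k, cst k * ∑ u, y ⟨k, u⟩ = ∑ c : Arc A β, cst c.1 * y c := by
  simp [Fintype.sum_sigma, mul_sum]

lemma lpCosts_anti {ℓ ℓ' : ℕ} (h : ℓ ≤ ℓ') : lpCosts A β b cst ℓ' ⊆ lpCosts A β b cst ℓ :=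
  fun _ ⟨y, hy, hmom, hr⟩ => ⟨y, hy, fun z hz hzℓ => hmom z hz (hzℓ.trans h), hr⟩

lemma intCosts_subset_lpCosts (hb : b ≤ β) (ℓ : ℕ) : intCosts A b cst ⊆ lpCosts A β b cst ℓ := by
  rintro _ ⟨x, hx, rfl⟩
  have hAx : A *ᵥ x = b := funext hx
  obtain ⟨y, hy, hmarg, hcons⟩ := exists_isFlow x (hAx ▸ hb)
  refine ⟨y, hy, fun z hz _ => ?_, by simp [hmarg]⟩
  have hz0 : (fun j => (z j : ℕ)) ≠ 0 := fun h => by simp [h] at hz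
  rw [hcons, hAx, monomial_zero_right hz0, sub_zero]

lemma sum_mul_le_of_degree_one (hA : ∀ k j, A j k ≤ β j) {y : Arc A β → ℝ}
    (hmom : ∀ z : ∀ j, Fin (β j + 1), 1 ≤ ∑ j, (z j : ℕ) → ∑ j, (z j : ℕ) ≤ 1 →
      monomial (fun j => z j) b = netChange A β y (monomial fun j => z j)) (j : Fin m) :
    ∑ c : Arc A β, y c * A j c.1 ≤ b j := by
  classical
  by_cases hβ : β j = 0
  · simp [fun k => Nat.le_zero.1 (hβ ▸ hA k j)]
  let z : ∀ j', Fin (β j' + 1) := fun j' => ⟨(Pi.single j 1 : Fin m → ℕ) j', by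
    by_cases h : j' = j
    · subst h; simp; omega
    · simp [h]⟩
  have hz : (fun j' => (z j' : ℕ)) = Pi.single j 1 := rfl
  have h := hmom z (by simp [hz]) (by simp [hz])
  rw [hz, monomial_single_one, netChange_apply] at h
  simp [h, monomial_single_one, Arc.head, Arc.tail]

lemma lpCosts_bddBelow (hA : ∀ k j, A j k ≤ β j) (hAne : ∀ k, ∃ j, A j k ≠ 0) {ℓ : ℕ}
    (hℓ : 1 ≤ ℓ) : BddBelow (lpCosts A β b cst ℓ) := by
  refine ⟨-((∑ k, |cst k|) * ∑ j, (b j : ℝ)), ?_⟩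
  rintro _ ⟨y, hy, hmom, rfl⟩
  have hy_sum : ∑ c, y c ≤ ∑ j, (b j : ℝ) := calc
    ∑ c, y c ≤ ∑ c : Arc A β, y c * ∑ j, (A j c.1 : ℝ) := sum_le_sum fun c _ => by
      obtain ⟨j, hj⟩ := hAne c.1
      refine le_mul_of_one_le_right (hy c) (le_trans ?_
        (single_le_sum (f := fun j => (A j c.1 : ℝ)) (by simp) (mem_univ j)))
      exact_mod_cast Nat.one_le_iff_ne_zero.2 hj
    _ = ∑ j, ∑ c : Arc A β, y c * A j c.1 := by simp_rw [mul_sum]; exact sum_comm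
    _ ≤ ∑ j, (b j : ℝ) := sum_le_sum fun j _ =>
      sum_mul_le_of_degree_one hA (fun z h1 h2 => hmom z h1 (h2.trans hℓ)) j
  have hcst : ∀ k, -(∑ k, |cst k|) ≤ cst k := fun k =>
    neg_le_of_abs_le (single_le_sum (f := fun k => |cst k|) (by simp) (mem_univ k))
  have hS : 0 ≤ ∑ k, |cst k| := sum_nonneg fun _ _ => abs_nonneg _
  rw [sum_mul_sum_eq_sum_arc]
  calc -((∑ k, |cst k|) * ∑ j, (b j : ℝ)) ≤ ∑ c, -(∑ k, |cst k|) * y c := by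
        rw [← mul_sum, neg_mul, neg_le_neg_iff]
        exact mul_le_mul_of_nonneg_left hy_sum hS
    _ ≤ _ := sum_le_sum fun c _ => mul_le_mul_of_nonneg_right (hcst c.1) (hy c)

lemma neg_netChange_le_of_potential {y : Arc A β → ℝ} (hy : ∀ c, 0 ≤ y c)
    {V : (Fin m → ℕ) → ℝ} (hV : ∀ c : Arc A β, V c.tail ≤ cst c.1 + V c.head) :
    -netChange A β y V ≤ ∑ c, cst c.1 * y c := by
  rw [netChange_apply, ← sum_neg_distrib]
  exact sum_le_sum fun c _ => by nlinarith [hy c, hV c]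

lemma sInf_intCosts_mem_lowerBounds (hb : b ≤ β) (hA : ∀ k j, A j k ≤ β j)
    (hAne : ∀ k, ∃ j, A j k ≠ 0) (hfeas : (intCosts A b cst).Nonempty) :
    sInf (intCosts A b cst) ∈ lowerBounds (lpCosts A β b cst (∑ j, β j)) := by
  rintro _ ⟨y, hy, hmom, rfl⟩
  have hcons := netChange_eq_sub_of_monomial hA hb (y := y) fun z => by
    by_cases hz : (fun j => (z j : ℕ)) = 0
    · simp [hz, monomial_zero_left, netChange_apply]
    · rw [← hmom z ?_ (sum_le_sum fun j _ => Nat.lt_succ_iff.1 (z j).is_lt),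
        monomial_zero_right hz, sub_zero]
      exact Nat.one_le_iff_ne_zero.2 fun h =>
        hz (funext fun j => sum_eq_zero_iff.1 h j (mem_univ j))
  have hV := neg_netChange_le_of_potential hy fun c =>
    costToGo_le_add (b := b) (cst := cst) hAne c.tail c.1
  rw [hcons, costToGo_zero hfeas] at hV
  rw [sum_mul_sum_eq_sum_arc]
  linarith [costToGo_self_nonpos (b := b) (cst := cst) hAne]

end Relaxation

end IntegerProgram

open IntegerProgram

theorem stmt_13_general (m n : ℕ)
    (A : Matrix (Fin m) (Fin n) ℕ) (β b : Fin m → ℕ)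
    (hb : ∀ j, b j ≤ β j) (hA : ∀ k j, A j k ≤ β j)
    (hAne : ∀ k, ∃ j, A j k ≠ 0)
    (hfeas : ∃ x : Fin n → ℕ, ∀ j, ∑ k, A j k * x k = b j)
    (cst : Fin n → ℝ)
    (J : ℕ → ℝ)
    (hJ : ∀ ℓ : ℕ, J ℓ = sInf {r : ℝ |
      ∃ y : (Σ k : Fin n, ∀ j : Fin m, Fin (β j - A j k + 1)) → ℝ,
        (∀ c, 0 ≤ y c) ∧
        (∀ z : ∀ j : Fin m, Fin (β j + 1),
          1 ≤ ∑ j, (z j : ℕ) → (∑ j, (z j : ℕ)) ≤ ℓ →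
          (∏ j, ((b j : ℝ)) ^ (z j : ℕ)) =
            ∑ c : Σ k : Fin n, ∀ j : Fin m, Fin (β j - A j k + 1), y c *
              ((∏ j, (((c.2 j : ℕ) + A j c.1 : ℕ) : ℝ) ^ (z j : ℕ)) -
                ∏ j, ((c.2 j : ℕ) : ℝ) ^ (z j : ℕ))) ∧
        r = ∑ k, cst k * ∑ u : ∀ j' : Fin m, Fin (β j' - A j' k + 1), y ⟨k, u⟩})
    (Jdot : ℝ)
    (hJdot : Jdot = sInf {r : ℝ |
      ∃ x : Fin n → ℕ, (∀ j, ∑ k, A j k * x k = b j) ∧ r = ∑ k, cst k * (x k : ℝ)}) :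
    (∀ ℓ ℓ' : ℕ, 1 ≤ ℓ → ℓ ≤ ℓ' → ℓ' ≤ ∑ j, β j → J ℓ ≤ J ℓ') ∧
    J (∑ j, β j) = Jdot := by
  have hJ' : ∀ ℓ, J ℓ = sInf (lpCosts A β b cst ℓ) := hJ
  have hJdot' : Jdot = sInf (intCosts A b cst) := hJdot
  obtain ⟨x₀, hx₀⟩ := hfeas
  have hne : (intCosts A b cst).Nonempty := ⟨_, x₀, hx₀, rfl⟩
  have hint := intCosts_subset_lpCosts (A := A) (β := β) (cst := cst) hb
  refine ⟨fun ℓ ℓ' hℓ hℓℓ' _ => ?_, ?_⟩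
  · rw [hJ', hJ']
    exact csInf_le_csInf (lpCosts_bddBelow hA hAne hℓ) (hne.mono (hint ℓ')) (lpCosts_anti hℓℓ')
  · have hlow := sInf_intCosts_mem_lowerBounds hb hA hAne hne
    rw [hJ', hJdot']
    exact le_antisymm (le_csInf hne fun r hr => csInf_le ⟨_, hlow⟩ (hint _ hr))
      (le_csInf (hne.mono (hint _)) hlow)

/-- The hierarchy of LP relaxations: `J_1 ≤ J_2 ≤ … ≤ J_{|β|}` and `J_{|β|} = J_•`. -/
theorem stmt_13 (m n : ℕ) (hm : 0 < m) (hn : 0 < n)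
    (A : Matrix (Fin m) (Fin n) ℕ) (β b : Fin m → ℕ)
    (hb : ∀ j, b j ≤ β j) (hA : ∀ k j, A j k ≤ β j)
    (hAne : ∀ k, ∃ j, A j k ≠ 0)
    (hfeas : ∃ x : Fin n → ℕ, ∀ j, ∑ k, A j k * x k = b j)
    (cst : Fin n → ℝ)
    (J : ℕ → ℝ)
    (hJ : ∀ ℓ : ℕ, J ℓ = sInf {r : ℝ |
      ∃ y : (Σ k : Fin n, ∀ j : Fin m, Fin (β j - A j k + 1)) → ℝ,
        (∀ c, 0 ≤ y c) ∧
        (∀ z : ∀ j : Fin m, Fin (β j + 1),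
          1 ≤ ∑ j, (z j : ℕ) → (∑ j, (z j : ℕ)) ≤ ℓ →
          (∏ j, ((b j : ℝ)) ^ (z j : ℕ)) =
            ∑ c : Σ k : Fin n, ∀ j : Fin m, Fin (β j - A j k + 1), y c *
              ((∏ j, (((c.2 j : ℕ) + A j c.1 : ℕ) : ℝ) ^ (z j : ℕ)) -
                ∏ j, ((c.2 j : ℕ) : ℝ) ^ (z j : ℕ))) ∧
        r = ∑ k, cst k * ∑ u : ∀ j' : Fin m, Fin (β j' - A j' k + 1), y ⟨k, u⟩})
    (Jdot : ℝ)
    (hJdot : Jdot = sInf {r : ℝ |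
      ∃ x : Fin n → ℕ, (∀ j, ∑ k, A j k * x k = b j) ∧ r = ∑ k, cst k * (x k : ℝ)}) :
    (∀ ℓ ℓ' : ℕ, 1 ≤ ℓ → ℓ ≤ ℓ' → ℓ' ≤ ∑ j, β j → J ℓ ≤ J ℓ') ∧
    J (∑ j, β j) = Jdot :=
  stmt_13_general m n A β b hb hA hAne hfeas cst J hJ Jdot hJdot
end

section
/- Let β, b ∈ ℕ^m and A ∈ ℕ^{m×n} with columns A_1,…,A_n satisfy b ≤ β and A_k ≤ β for all k, and let Δ, Θ be as below with s = ∏_j (1+β_j). Define the polyhedral cone C_β := {ξ ∈ ℝ^s : (ΔΘ)'ξ ≥ 0} and, for ξ = (ξ_z) ∈ ℝ^s, the polynomial value p_ξ(b) := Σ_{z ∈ ℕ^m, 0 ≠ z ≤ β} ξ_z · b^z. Then exactly one of the following two statements holds: (a) the system Ax = b has a solution x ∈ ℕ^n; (b) there exists ξ ∈ C_β with p_ξ(b) < 0. -/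
open Matrix

/-- The Vandermonde matrix `Δ[z;w] = w^z` (with `0^0 = 1`), `z, w ≤ β`. -/
noncomputable def delta (m : ℕ) (β : Fin m → ℕ) : Matrix (RowIdx m β) (RowIdx m β) ℝ :=
  Matrix.of fun z w => ∏ j, ((w j : ℕ) : ℝ) ^ (z j : ℕ)

/-!
Write `η := Δᵀ ξ`, so that `η w = ∑_z ξ_z w^z` is the polynomial with coefficient vector `ξ`
evaluated at the grid point `w`. Then `p_ξ(b) = η b - η 0`, and `(ΔΘ)ᵀ ξ = Θᵀ η ≥ 0` says that
`η` does not decrease along the edges `u → u + A_k` of the box `{w ≤ β}`. A polynomial of degree at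
most `β_j` in each variable that vanishes on the grid is zero (combinatorial Nullstellensatz), so
`Δᵀ` is invertible and `η` can be any function on the box. If `A x = b`, adding the columns of `A`
one at a time is a path of edges from `0` to `b`, so `η b ≥ η 0`. Otherwise
`η := -1` off the set `{A x}` and `0` on it is monotone along edges and has `η b < η 0`.
-/

open Finset

theorem Pi.induction_add_single_one {ι : Type*} [Finite ι] [DecidableEq ι]
    {p : (ι → ℕ) → Prop} (zero : p 0) (step : ∀ x i, p x → p (x + Pi.single i 1))
    (x : ι → ℕ) : p x := by
  refine WellFoundedLT.induction x fun x ih => ?_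
  obtain rfl | hx0 := eq_or_ne x 0
  · exact zero
  · obtain ⟨i, hi⟩ : ∃ i, x i ≠ 0 := by simpa [funext_iff] using hx0
    have hx : Function.update x i (x i - 1) + Pi.single i 1 = x := by
      funext j
      rcases eq_or_ne j i with rfl | hj
      · simp only [Pi.add_apply, Function.update_self, Pi.single_eq_same]
        omega
      · simp [hj]
    rw [← hx]
    exact step _ i (ih _ (update_lt_self_iff.2 (by omega)))

namespace RowIdx

variable {m : ℕ} {β : Fin m → ℕ}

def ofLE (v : Fin m → ℕ) (hv : v ≤ β) : RowIdx m β := fun j => ⟨v j, Nat.lt_succ_of_le (hv j)⟩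

theorem coe_eq_iff {w : RowIdx m β} {v : Fin m → ℕ} (hv : v ≤ β) :
    (fun j => (w j : ℕ)) = v ↔ w = ofLE v hv := by
  simp [funext_iff, ofLE, Fin.ext_iff]

end RowIdx

section GridPolynomial

variable {R : Type*} [CommRing R] {m : ℕ} {β : Fin m → ℕ}

noncomputable def gridPoly (ξ : RowIdx m β → R) : MvPolynomial (Fin m) R :=
  ∑ z, MvPolynomial.monomial (Finsupp.equivFunOnFinite.symm fun j => (z j : ℕ)) (ξ z)

theorem eval_gridPoly (ξ : RowIdx m β → R) (x : Fin m → R) :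
    MvPolynomial.eval x (gridPoly ξ) = ∑ z, ξ z * ∏ j, x j ^ (z j : ℕ) := by
  simp only [gridPoly, map_sum, MvPolynomial.eval_monomial]
  refine sum_congr rfl fun z _ => ?_
  rw [Finsupp.prod_fintype _ _ (fun _ => pow_zero _)]
  rfl

theorem coeff_gridPoly (ξ : RowIdx m β → R) (z : RowIdx m β) :
    MvPolynomial.coeff (Finsupp.equivFunOnFinite.symm fun j => (z j : ℕ)) (gridPoly ξ) = ξ z := by
  classical
  simp only [gridPoly, MvPolynomial.coeff_sum, MvPolynomial.coeff_monomial]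
  rw [sum_eq_single z (fun z' _ hz' => if_neg ?_) (by simp), if_pos rfl]
  simpa [funext_iff, Fin.ext_iff] using hz'

theorem degreeOf_gridPoly_lt (ξ : RowIdx m β → R) (j : Fin m) :
    (gridPoly ξ).degreeOf j < β j + 1 := by
  classical
  refine (MvPolynomial.degreeOf_lt_iff (Nat.succ_pos _)).2 fun d hd => ?_
  obtain ⟨z, -, hz⟩ := mem_biUnion.1 (MvPolynomial.support_sum hd)
  rw [Finset.mem_singleton.1 (MvPolynomial.support_monomial_subset hz)]
  exact (z j).is_lt

theorem eq_zero_of_eval_gridPoly_eq_zero [IsDomain R] [CharZero R] {ξ : RowIdx m β → R}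
    (h : ∀ w : RowIdx m β, MvPolynomial.eval (fun j => ((w j : ℕ) : R)) (gridPoly ξ) = 0) :
    ξ = 0 := by
  have hP : gridPoly ξ = 0 := by
    refine MvPolynomial.eq_zero_of_eval_zero_at_prod_finset _
      (fun j => (range (β j + 1)).map Nat.castEmbedding) (fun j => ?_) fun x hx => ?_
    · simpa using degreeOf_gridPoly_lt ξ j
    · choose w hw using fun j => mem_map.1 (hx j)
      convert h fun j => ⟨w j, mem_range.1 (hw j).1⟩
      exact (hw _).2.symm
  funext z
  rw [← coeff_gridPoly ξ z, hP, MvPolynomial.coeff_zero, Pi.zero_apply]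

end GridPolynomial

theorem delta_transpose_mulVec_apply {m : ℕ} {β : Fin m → ℕ} (ξ : RowIdx m β → ℝ)
    (w : RowIdx m β) :
    ((delta m β)ᵀ *ᵥ ξ) w = MvPolynomial.eval (fun j => ((w j : ℕ) : ℝ)) (gridPoly ξ) := by
  simp only [eval_gridPoly, mulVec, dotProduct, transpose_apply, delta, of_apply, mul_comm]

theorem delta_transpose_mulVec_surjective (m : ℕ) (β : Fin m → ℕ) :
    Function.Surjective (delta m β)ᵀ.mulVec := by
  classical
  refine mulVec_surjective_iff_isUnit.2 (mulVec_injective_iff_isUnit.1 fun ξ ξ' h => ?_)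
  refine sub_eq_zero.1 (eq_zero_of_eval_gridPoly_eq_zero fun w => ?_)
  rw [← delta_transpose_mulVec_apply, mulVec_sub, h, sub_self, Pi.zero_apply]


namespace ColIdx

variable {m n : ℕ} {β : Fin m → ℕ} {A : Matrix (Fin m) (Fin n) ℕ}

def src (c : ColIdx m n β A) : RowIdx m β :=
  RowIdx.ofLE (fun j => c.2 j) fun j => (Nat.lt_succ_iff.1 (c.2 j).is_lt).trans tsub_le_self

def tgt (hA : ∀ k j, A j k ≤ β j) (c : ColIdx m n β A) : RowIdx m β :=
  RowIdx.ofLE (fun j => c.2 j + A j c.1) fun j => by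
    have := (c.2 j).is_lt; have := hA c.1 j; dsimp only; omega

end ColIdx

section Network

variable {m n : ℕ} {β : Fin m → ℕ} {A : Matrix (Fin m) (Fin n) ℕ}

/-- The source and target of `c` coincide exactly when the column `A_k` is zero; `Θ` then has a
single entry `-1` in column `c`. -/
theorem theta_transpose_mulVec_apply (hA : ∀ k j, A j k ≤ β j) (η : RowIdx m β → ℝ)
    (c : ColIdx m n β A) :
    ((theta m n β A)ᵀ *ᵥ η) c = (if c.tgt hA = c.src then 0 else η (c.tgt hA)) - η c.src := by
  simp only [mulVec, dotProduct, transpose_apply, theta, of_apply]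
  have hsrc (w : RowIdx m β) : ((fun j => (w j : ℕ)) = fun j => (c.2 j : ℕ)) ↔ w = c.src :=
    RowIdx.coe_eq_iff _
  have htgt (w : RowIdx m β) :
      ((fun j => (w j : ℕ)) = fun j => (c.2 j : ℕ) + A j c.1) ↔ w = c.tgt hA :=
    RowIdx.coe_eq_iff _
  simp only [hsrc, htgt]
  rw [← sum_erase_add _ _ (mem_univ c.src), if_pos rfl,
    sum_congr rfl fun w hw => by rw [if_neg (ne_of_mem_erase hw), ite_mul, one_mul, zero_mul],
    sum_ite_eq' _ _ η]
  simp only [mem_erase, ne_eq, mem_univ, and_comm, true_and, ite_not, neg_mul, one_mul]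
  ring

end Network

def cone (m n : ℕ) (β : Fin m → ℕ) (A : Matrix (Fin m) (Fin n) ℕ) : Set (RowIdx m β → ℝ) :=
  {ξ | ∀ c, 0 ≤ ((delta m β * theta m n β A)ᵀ *ᵥ ξ) c}

section Alternative

variable {m n : ℕ} {β : Fin m → ℕ} {A : Matrix (Fin m) (Fin n) ℕ}

theorem delta_mul_theta_transpose_mulVec (ξ : RowIdx m β → ℝ) :
    (delta m β * theta m n β A)ᵀ *ᵥ ξ = (theta m n β A)ᵀ *ᵥ ((delta m β)ᵀ *ᵥ ξ) := by
  rw [transpose_mul, mulVec_mulVec]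

theorem sum_filter_ne_zero_eq_sub {b : Fin m → ℕ} (hb : b ≤ β) (ξ : RowIdx m β → ℝ) :
    ∑ z ∈ univ.filter (fun z : RowIdx m β => (fun j => (z j : ℕ)) ≠ fun _ => 0),
        ξ z * ∏ j, (b j : ℝ) ^ (z j : ℕ)
      = ((delta m β)ᵀ *ᵥ ξ) (RowIdx.ofLE b hb)
        - ((delta m β)ᵀ *ᵥ ξ) (RowIdx.ofLE 0 fun j => Nat.zero_le (β j)) := by
  set z₀ : RowIdx m β := RowIdx.ofLE 0 fun j => Nat.zero_le (β j)
  have hfilter : univ.filter (fun z : RowIdx m β => (fun j => (z j : ℕ)) ≠ fun _ => 0)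
      = univ.erase z₀ := by
    ext z
    rw [mem_filter, mem_erase, Ne, RowIdx.coe_eq_iff fun j => Nat.zero_le (β j)]
    exact and_comm
  have hz₀ : ((delta m β)ᵀ *ᵥ ξ) z₀ = ξ z₀ := by
    rw [delta_transpose_mulVec_apply, ← coeff_gridPoly ξ z₀]
    have hpt : (fun j => ((z₀ j : ℕ) : ℝ)) = 0 := by ext; simp [z₀, RowIdx.ofLE]
    have hexp : Finsupp.equivFunOnFinite.symm (fun j => (z₀ j : ℕ)) = 0 := by
      ext; simp [z₀, RowIdx.ofLE]
    rw [hpt, hexp, MvPolynomial.eval_zero, MvPolynomial.constantCoeff_eq]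
  rw [hz₀, delta_transpose_mulVec_apply, eval_gridPoly, hfilter, ← add_sum_erase _ _ (mem_univ z₀)]
  simp [z₀, RowIdx.ofLE]

theorem le_of_forall_src_le_tgt {α : Type*} [Preorder α] (hA : ∀ k j, A j k ≤ β j)
    {η : RowIdx m β → α}
    (hη : ∀ c : ColIdx m n β A, c.tgt hA ≠ c.src → η c.src ≤ η (c.tgt hA))
    (x : Fin n → ℕ) (hx : A *ᵥ x ≤ β) :
    η (RowIdx.ofLE 0 fun j => Nat.zero_le (β j)) ≤ η (RowIdx.ofLE (A *ᵥ x) hx) := by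
  classical
  induction x using Pi.induction_add_single_one with
  | zero => exact (congrArg η (funext fun j => Fin.ext (by simp [RowIdx.ofLE]))).le
  | step x k ih =>
    have hAx : A *ᵥ (x + Pi.single k 1) = A *ᵥ x + A.col k := by
      rw [mulVec_add, mulVec_single_one]
    have hx' : A *ᵥ x ≤ β := le_trans (by rw [hAx]; exact le_self_add) hx
    let c : ColIdx m n β A := ⟨k, fun j => ⟨(A *ᵥ x) j, by
      have := hx j; rw [hAx] at this; simp only [Pi.add_apply, col_apply] at this; omega⟩⟩
    have hsrc : c.src = RowIdx.ofLE (A *ᵥ x) hx' := rfl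
    have htgt : c.tgt hA = RowIdx.ofLE (A *ᵥ (x + Pi.single k 1)) hx := by
      funext j
      simp [ColIdx.tgt, RowIdx.ofLE, hAx, c]
    refine (ih hx').trans ?_
    rw [← hsrc, ← htgt]
    by_cases h : c.tgt hA = c.src
    · rw [h]
    · exact hη c h
theorem delta_transpose_mulVec_le_of_mem_cone (hA : ∀ k j, A j k ≤ β j) {ξ : RowIdx m β → ℝ}
    (hξ : ξ ∈ cone m n β A) (x : Fin n → ℕ) (hx : A *ᵥ x ≤ β) :
    ((delta m β)ᵀ *ᵥ ξ) (RowIdx.ofLE 0 fun j => Nat.zero_le (β j))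
      ≤ ((delta m β)ᵀ *ᵥ ξ) (RowIdx.ofLE (A *ᵥ x) hx) := by
  refine le_of_forall_src_le_tgt hA (fun c hc => ?_) x hx
  have := hξ c
  rw [delta_mul_theta_transpose_mulVec, theta_transpose_mulVec_apply hA, if_neg hc] at this
  linarith

theorem exists_mem_cone_of_forall_mulVec_ne (hA : ∀ k j, A j k ≤ β j) {b : Fin m → ℕ}
    (hb : b ≤ β) (h : ∀ x, A *ᵥ x ≠ b) :
    ∃ ξ ∈ cone m n β A, ((delta m β)ᵀ *ᵥ ξ) (RowIdx.ofLE b hb)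
        < ((delta m β)ᵀ *ᵥ ξ) (RowIdx.ofLE 0 fun j => Nat.zero_le (β j)) := by
  classical
  let reachable (w : RowIdx m β) : Prop := ∃ x, A *ᵥ x = fun j => (w j : ℕ)
  have hstep (c : ColIdx m n β A) : reachable c.src → reachable (c.tgt hA) := by
    rintro ⟨x, hx⟩
    refine ⟨x + Pi.single c.1 1, ?_⟩
    rw [mulVec_add, mulVec_single_one, hx]
    rfl
  obtain ⟨ξ, hξ⟩ := delta_transpose_mulVec_surjective m β
    fun w => if reachable w then 0 else -1
  refine ⟨ξ, fun c => ?_, ?_⟩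
  · rw [delta_mul_theta_transpose_mulVec, hξ, theta_transpose_mulVec_apply hA]
    by_cases hc : reachable c.src
    · simp [hc, hstep c hc]
    · simp only [hc, if_false]
      split_ifs <;> norm_num
  · rw [hξ]
    have hb_not : ¬ reachable (RowIdx.ofLE b hb) := fun ⟨x, hx⟩ => h x hx
    have h0 : reachable (RowIdx.ofLE 0 fun j => Nat.zero_le (β j)) := ⟨0, mulVec_zero A⟩
    simp [hb_not, h0]

end Alternative

theorem stmt_14_general (m n : ℕ)
    (A : Matrix (Fin m) (Fin n) ℕ) (β b : Fin m → ℕ)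
    (hb : ∀ j, b j ≤ β j) (hA : ∀ k j, A j k ≤ β j) :
    Xor' (∃ x : Fin n → ℕ, ∀ j, ∑ k, A j k * x k = b j)
      (∃ ξ : RowIdx m β → ℝ,
        (∀ c, 0 ≤ (delta m β * theta m n β A)ᵀ.mulVec ξ c) ∧
        (∑ z ∈ Finset.univ.filter
            (fun z : RowIdx m β => (fun j => (z j : ℕ)) ≠ (fun _ => (0 : ℕ))),
          ξ z * ∏ j, ((b j : ℝ)) ^ (z j : ℕ)) < 0) := by
  simp_rw [sum_filter_ne_zero_eq_sub hb, sub_neg]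
  refine xor_iff_iff_not.2 ⟨?_, fun hno => by_contra fun hsol => hno ?_⟩
  · rintro ⟨x, hx⟩ ⟨ξ, hξ, hlt⟩
    obtain rfl : A *ᵥ x = b := funext hx
    exact (delta_transpose_mulVec_le_of_mem_cone hA hξ x hb).not_gt hlt
  · exact exists_mem_cone_of_forall_mulVec_ne hA hb fun x hx => hsol ⟨x, congrFun hx⟩

/-- Theorem of the alternative (polynomial certificate): exactly one of
(a) `Ax = b` has a solution `x ∈ ℕ^n`, or (b) `p_ξ(b) < 0` for some
`ξ ∈ C_β = {ξ : (ΔΘ)'ξ ≥ 0}`, where `p_ξ(b) = ∑_{0 ≠ z ≤ β} ξ_z b^z`. -/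
theorem stmt_14 (m n : ℕ) (hm : 0 < m) (hn : 0 < n)
    (A : Matrix (Fin m) (Fin n) ℕ) (β b : Fin m → ℕ)
    (hb : ∀ j, b j ≤ β j) (hA : ∀ k j, A j k ≤ β j) :
    Xor' (∃ x : Fin n → ℕ, ∀ j, ∑ k, A j k * x k = b j)
      (∃ ξ : RowIdx m β → ℝ,
        (∀ c, 0 ≤ (delta m β * theta m n β A)ᵀ.mulVec ξ c) ∧
        (∑ z ∈ Finset.univ.filter
            (fun z : RowIdx m β => (fun j => (z j : ℕ)) ≠ (fun _ => (0 : ℕ))),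
          ξ z * ∏ j, ((b j : ℝ)) ^ (z j : ℕ)) < 0) :=
  stmt_14_general m n A β b hb hA
end
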